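/- arXiv:2005.10804 — 9 statements merged into one kernel-verified Lean document; each statement's English description precedes it below -/
import Mathlib

section
/- Let X be a set, F a class of real-valued functions on X, Z a finite multiset of elements of X, and z ∈ Z. Let f, f' ∈ F and c > 0 satisfy c/2 < (f(z) − f'(z))² ≤ c. Let j ≥ 1 be an integer and let Z_1, …, Z_{j−1} be pairwise disjoint sub-multisets of Z such that Z_1 ∪ ⋯ ∪ Z_{j−1} together with one additional copy of z is contained in Z, and suppose that z is √(c/2)-dependent on Z_k with respect to F for every k ∈ {1, …, j−1}. Then (f(z) − f'(z))² / ‖f − f'‖²_Z ≤ 2/j. -/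
/-- The squared data norm `‖g‖_Z² = ∑_{z ∈ Z} g(z)²`, counting multiplicity. -/
noncomputable def msNormSq {X : Type*} (Z : Multiset X) (g : X → ℝ) : ℝ :=
  (Z.map fun x => g x ^ 2).sum

/-- The data norm `‖g‖_Z = (∑_{z ∈ Z} g(z)²)^{1/2}`. -/
noncomputable def msNorm {X : Type*} (Z : Multiset X) (g : X → ℝ) : ℝ :=
  Real.sqrt (msNormSq Z g)

/-- `z` is `ε`-dependent on the multiset `Z` with respect to the function class `F`. -/
def EpsDep {X : Type*} (F : Set (X → ℝ)) (ε : ℝ) (Z : Multiset X) (z : X) : Prop :=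
  ∀ f ∈ F, ∀ f' ∈ F, msNorm Z (fun x => f x - f' x) ≤ ε → |f z - f' z| ≤ ε

/-!
Write `g = f - f'`. If `‖g‖²_{Z_k} ≤ c/2` for some block, `√(c/2)`-dependence would force
`g(z)² ≤ c/2`; hence every block carries more than `c/2`, and the disjoint blocks together with
the extra copy of `z` give `‖g‖²_Z ≥ (j - 1) c/2 + g(z)² ≥ (j + 1) g(z)² / 2`, using `g(z)² ≤ c`.
-/

section msNormSq

variable {X : Type*}

lemma msNormSq_nonneg (Z : Multiset X) (g : X → ℝ) : 0 ≤ msNormSq Z g :=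
  Multiset.sum_nonneg fun _ hx => by
    obtain ⟨_, _, rfl⟩ := Multiset.mem_map.mp hx
    positivity

@[simp]
lemma msNormSq_singleton (z : X) (g : X → ℝ) : msNormSq {z} g = g z ^ 2 := by
  simp [msNormSq]

@[simp]
lemma msNormSq_add (A B : Multiset X) (g : X → ℝ) :
    msNormSq (A + B) g = msNormSq A g + msNormSq B g := by
  simp [msNormSq]

lemma msNormSq_mono {A B : Multiset X} (h : A ≤ B) (g : X → ℝ) :
    msNormSq A g ≤ msNormSq B g := by
  obtain ⟨C, rfl⟩ := Multiset.le_iff_exists_add.mp h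
  simpa using msNormSq_nonneg C g

lemma msNormSq_sum {ι : Type*} (s : Finset ι) (Zs : ι → Multiset X) (g : X → ℝ) :
    msNormSq (∑ k ∈ s, Zs k) g = ∑ k ∈ s, msNormSq (Zs k) g :=
  map_sum (AddMonoidHom.mk' (msNormSq · g) (msNormSq_add · · g)) Zs s

lemma sum_msNormSq_add_sq_le {ι : Type*} {s : Finset ι} {Zs : ι → Multiset X} {Z : Multiset X}
    {z : X} (h : (∑ k ∈ s, Zs k) + {z} ≤ Z) (g : X → ℝ) :
    ∑ k ∈ s, msNormSq (Zs k) g + g z ^ 2 ≤ msNormSq Z g := by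
  simpa [msNormSq_sum] using msNormSq_mono h g

end msNormSq

lemma EpsDep.sq_lt_msNormSq {X : Type*} {F : Set (X → ℝ)} {ε : ℝ} {Z : Multiset X} {z : X}
    (hdep : EpsDep F ε Z z) (hε : 0 ≤ ε) {f f' : X → ℝ} (hf : f ∈ F) (hf' : f' ∈ F)
    (hz : ε ^ 2 < (f z - f' z) ^ 2) : ε ^ 2 < msNormSq Z (fun x => f x - f' x) := by
  by_contra! hZ
  have hnorm : msNorm Z (fun x => f x - f' x) ≤ ε := (Real.sqrt_le_left hε).mpr hZ
  have hzε : |f z - f' z| ≤ |ε| := (abs_of_nonneg hε).symm ▸ hdep f hf f' hf' hnorm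
  exact hz.not_ge (sq_le_sq.mpr hzε)

theorem sensitivity_ratio_le_general {X : Type*} (F : Set (X → ℝ)) (Z : Multiset X) (z : X)
    (f f' : X → ℝ) (hf : f ∈ F) (hf' : f' ∈ F)
    (c : ℝ)
    (hlow : c / 2 < (f z - f' z) ^ 2) (hhigh : (f z - f' z) ^ 2 ≤ c)
    (j : ℕ) (hj : 1 ≤ j) (Zs : Fin (j - 1) → Multiset X)
    (hsub : (∑ k : Fin (j - 1), Zs k) + {z} ≤ Z)
    (hdep : ∀ k : Fin (j - 1), EpsDep F (Real.sqrt (c / 2)) (Zs k) z) :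
    (f z - f' z) ^ 2 / msNormSq Z (fun x => f x - f' x) ≤ 2 / (j : ℝ) := by
  have hc : 0 ≤ c / 2 := by linarith [sq_nonneg (f z - f' z)]
  have hblock (k : Fin (j - 1)) : c / 2 < msNormSq (Zs k) (fun x => f x - f' x) := by
    have := (hdep k).sq_lt_msNormSq (Real.sqrt_nonneg _) hf hf' (by rwa [Real.sq_sqrt hc])
    rwa [Real.sq_sqrt hc] at this
  have hN : ((j : ℝ) - 1) * (c / 2) + (f z - f' z) ^ 2 ≤ msNormSq Z (fun x => f x - f' x) := by
    calc ((j : ℝ) - 1) * (c / 2) + (f z - f' z) ^ 2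
        = ∑ _k : Fin (j - 1), c / 2 + (f z - f' z) ^ 2 := by simp [Nat.cast_sub hj]
      _ ≤ ∑ k : Fin (j - 1), msNormSq (Zs k) (fun x => f x - f' x) + (f z - f' z) ^ 2 := by
        gcongr with k; exact (hblock k).le
      _ ≤ _ := sum_msNormSq_add_sq_le hsub _
  have hj' : (1 : ℝ) ≤ j := by exact_mod_cast hj
  have hNpos : 0 < msNormSq Z (fun x => f x - f' x) := by nlinarith
  rw [div_le_div_iff₀ hNpos (by positivity)]
  nlinarith [mul_nonneg (sub_nonneg.mpr hj') (sub_nonneg.mpr hhigh)]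

/-- if `c/2 < (f(z) − f'(z))² ≤ c`, and `z` is `√(c/2)`-dependent on each of
`j − 1` pairwise disjoint sub-multisets `Z_1, …, Z_{j−1}` of `Z` whose disjoint union together
with one extra copy of `z` is contained in `Z`, then `(f(z) − f'(z))² / ‖f − f'‖²_Z ≤ 2/j`. -/
theorem sensitivity_ratio_le {X : Type*} (F : Set (X → ℝ)) (Z : Multiset X) (z : X)
    (hz : z ∈ Z) (f f' : X → ℝ) (hf : f ∈ F) (hf' : f' ∈ F)
    (c : ℝ) (hc : 0 < c)
    (hlow : c / 2 < (f z - f' z) ^ 2) (hhigh : (f z - f' z) ^ 2 ≤ c)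
    (j : ℕ) (hj : 1 ≤ j) (Zs : Fin (j - 1) → Multiset X)
    (hsub : (∑ k : Fin (j - 1), Zs k) + {z} ≤ Z)
    (hdep : ∀ k : Fin (j - 1), EpsDep F (Real.sqrt (c / 2)) (Zs k) z) :
    (f z - f' z) ^ 2 / msNormSq Z (fun x => f x - f' x) ≤ 2 / (j : ℝ) :=
  sensitivity_ratio_le_general F Z z f f' hf hf' c hlow hhigh j hj Zs hsub hdep
end

section
/- Let X be a set, H ≥ 1 an integer, F a class of functions from X to [0, H+1], Z a nonempty finite multiset of elements of X, λ > 0, ε ∈ (0,1], δ ∈ (0,1), and suppose the covering number N(F, (ε/72)·√(λδ/|Z|)) is finite. Perform sensitivity subsampling of Z with parameters (λ, ε, δ). Then with probability at least 1 − δ/4, the size of the resulting multiset satisfies |Z'| = ∑_{z∈Z} X_z/p_z ≤ 4|Z|/δ. -/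
open MeasureTheory ProbabilityTheory


/-- There is a sequence of length `n` in `X` such that, for some `ε' ≥ ε`, every element
is `ε'`-independent of its predecessors with respect to `F`. -/
def EluderLen {X : Type*} (F : Set (X → ℝ)) (ε : ℝ) (n : ℕ) : Prop :=
  ∃ ε' ≥ ε, ∃ l : Fin n → X, ∀ i : Fin n,
    ¬ EpsDep F ε' ((Finset.univ.filter (fun j => j < i)).val.map l) (l i)

/-- The `λ`-sensitivity of `z` with respect to `Z` and `F` (0 if no admissible pair exists). -/
noncomputable def sensitivity {X : Type*} (F : Set (X → ℝ)) (lam : ℝ) (Z : Multiset X)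
    (z : X) : ℝ :=
  sSup {r : ℝ | ∃ f ∈ F, ∃ f' ∈ F,
    lam ≤ msNormSq Z (fun x => f x - f' x) ∧
    r = (f z - f' z) ^ 2 / msNormSq Z (fun x => f x - f' x)}

/-- `N` is the least cardinality of a subset `C ⊆ F` which is an `ε`-cover of `F` in
the supremum distance. -/
def IsCoverNum {X : Type*} (F : Set (X → ℝ)) (ε : ℝ) (N : ℕ) : Prop :=
  IsLeast {m : ℕ | ∃ C : Finset (X → ℝ), ↑C ⊆ F ∧
    (∀ f ∈ F, ∃ g ∈ C, ∀ x, |f x - g x| ≤ ε) ∧ C.card = m} N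

/-- `p` is the smallest real number such that `1/p` is a positive integer and
`p ≥ min{1, s · κ}`. -/
def IsSamplingProb (s κ p : ℝ) : Prop :=
  IsLeast {q : ℝ | (∃ m : ℕ, 0 < m ∧ q = 1 / (m : ℝ)) ∧ min 1 (s * κ) ≤ q} p

/-!
The sum `∑ᵢ Xᵢ / pᵢ` is nonnegative and has expectation `|Z|`, since each Bernoulli variable
`Xᵢ` has mean `pᵢ > 0`. Markov's inequality at the threshold `4|Z|/δ` bounds the probability of
exceeding it by `δ/4`.
-/

lemma IsSamplingProb.pos {s κ p : ℝ} (h : IsSamplingProb s κ p) : 0 < p := by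
  obtain ⟨⟨⟨m, hm, rfl⟩, -⟩, -⟩ := h
  positivity

section Bernoulli

variable {Ω : Type*} [MeasurableSpace Ω] {μ : Measure Ω}

lemma lintegral_ofReal_of_zero_one {B : Ω → ℝ} (hB : Measurable B)
    (hval : ∀ ω, B ω = 0 ∨ B ω = 1) :
    ∫⁻ ω, ENNReal.ofReal (B ω) ∂μ = μ {ω | B ω = 1} := by
  have hind : (fun ω => ENNReal.ofReal (B ω)) = Set.indicator {ω | B ω = 1} 1 := by
    funext ω
    rcases hval ω with h | h <;> simp [h]
  rw [hind]
  exact lintegral_indicator_one (hB (measurableSet_singleton 1))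

lemma lintegral_ofReal_div_of_zero_one {B : Ω → ℝ} {q : ℝ} (hB : Measurable B)
    (hval : ∀ ω, B ω = 0 ∨ B ω = 1) (hq : 0 < q) (hber : μ {ω | B ω = 1} = ENNReal.ofReal q) :
    ∫⁻ ω, ENNReal.ofReal (B ω / q) ∂μ = 1 := by
  have hscale : ∀ ω, ENNReal.ofReal (B ω / q) = ENNReal.ofReal q⁻¹ * ENNReal.ofReal (B ω) :=
    fun ω => by rw [← ENNReal.ofReal_mul (inv_nonneg.mpr hq.le), div_eq_inv_mul]
  simp_rw [hscale]
  rw [lintegral_const_mul _ hB.ennreal_ofReal, lintegral_ofReal_of_zero_one hB hval, hber,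
    ← ENNReal.ofReal_mul (inv_nonneg.mpr hq.le), inv_mul_cancel₀ hq.ne', ENNReal.ofReal_one]

lemma lintegral_ofReal_sum_div_of_zero_one {ι : Type*} [Fintype ι] {B : ι → Ω → ℝ} {p : ι → ℝ}
    (hB : ∀ i, Measurable (B i)) (hval : ∀ i ω, B i ω = 0 ∨ B i ω = 1) (hp : ∀ i, 0 < p i)
    (hber : ∀ i, μ {ω | B i ω = 1} = ENNReal.ofReal (p i)) :
    ∫⁻ ω, ENNReal.ofReal (∑ i, B i ω / p i) ∂μ = Fintype.card ι := by
  have hnonneg : ∀ i ω, 0 ≤ B i ω / p i := fun i ω =>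
    div_nonneg (by rcases hval i ω with h | h <;> simp [h]) (hp i).le
  simp_rw [ENNReal.ofReal_sum_of_nonneg fun i _ => hnonneg i _]
  rw [lintegral_finsetSum _ fun i _ => ((hB i).div_const _).ennreal_ofReal]
  simp [lintegral_ofReal_div_of_zero_one (hB _) (hval _) (hp _) (hber _)]

end Bernoulli

lemma one_sub_lintegral_div_le_measure_le {Ω : Type*} [MeasurableSpace Ω] {μ : Measure Ω}
    [IsProbabilityMeasure μ] {f : Ω → ℝ} (hf : Measurable f) {c : ℝ} (hc : 0 < c) :
    1 - (∫⁻ ω, ENNReal.ofReal (f ω) ∂μ) / ENNReal.ofReal c ≤ μ {ω | f ω ≤ c} := by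
  have htail : μ {ω | f ω ≤ c}ᶜ ≤ (∫⁻ ω, ENNReal.ofReal (f ω) ∂μ) / ENNReal.ofReal c := by
    refine le_trans (measure_mono fun ω hω => ?_) (meas_ge_le_lintegral_div
      hf.ennreal_ofReal.aemeasurable (ENNReal.ofReal_pos.mpr hc).ne' ENNReal.ofReal_ne_top)
    exact ENNReal.ofReal_le_ofReal (le_of_not_ge hω)
  rw [prob_compl_eq_one_sub (measurableSet_le hf measurable_const)] at htail
  exact tsub_le_iff_tsub_le.mp htail

theorem subsample_size_bound_general {X : Type*} {Ω : Type*} [MeasurableSpace Ω]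
    (μ : Measure Ω) [IsProbabilityMeasure μ]
    (F : Set (X → ℝ))
    (n : ℕ) (hn : 1 ≤ n) (zs : Fin n → X)
    (lam : ℝ)
    (ε : ℝ) (δ : ℝ) (hδ : δ ∈ Set.Ioo (0 : ℝ) 1)
    (N : ℕ)
    (p : Fin n → ℝ)
    (hp : ∀ i, IsSamplingProb
      (sensitivity F lam (Multiset.map zs Finset.univ.val) (zs i))
      (72 * Real.log (4 * (N : ℝ) / δ) / ε ^ 2) (p i))
    (B : Fin n → Ω → ℝ) (hmeas : ∀ i, Measurable (B i))
    (hval : ∀ i ω, B i ω = 0 ∨ B i ω = 1)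
    (hber : ∀ i, μ {ω | B i ω = 1} = ENNReal.ofReal (p i)) :
    ENNReal.ofReal (1 - δ / 4) ≤
      μ {ω | ∑ i, B i ω / p i ≤ 4 * (n : ℝ) / δ} := by
  have hδ0 : 0 < δ := hδ.1
  have hn0 : (0 : ℝ) < n := by exact_mod_cast hn
  have hmean := lintegral_ofReal_sum_div_of_zero_one hmeas hval (fun i => (hp i).pos) hber
  rw [Fintype.card_fin] at hmean
  have hratio : (n : ENNReal) / ENNReal.ofReal (4 * n / δ) = ENNReal.ofReal (δ / 4) := by
    rw [← ENNReal.ofReal_natCast, ← ENNReal.ofReal_div_of_pos (by positivity)]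
    congr 1
    field_simp
  calc ENNReal.ofReal (1 - δ / 4)
      = 1 - (n : ENNReal) / ENNReal.ofReal (4 * n / δ) := by
        rw [hratio, ENNReal.ofReal_sub _ (by positivity), ENNReal.ofReal_one]
    _ ≤ μ {ω | ∑ i, B i ω / p i ≤ 4 * (n : ℝ) / δ} := by
        rw [← hmean]
        exact one_sub_lintegral_div_le_measure_le
          (Finset.measurable_sum _ fun i _ => (hmeas i).div_const _) (by positivity)

/-- Lemma 3 of the paper: with probability at least `1 − δ/4`, the size of
the sensitivity subsample satisfies `|Z'| = ∑_{z∈Z} X_z/p_z ≤ 4|Z|/δ`. -/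
theorem subsample_size_bound {X : Type*} {Ω : Type*} [MeasurableSpace Ω]
    (μ : Measure Ω) [IsProbabilityMeasure μ]
    (H : ℕ) (hH : 1 ≤ H)
    (F : Set (X → ℝ)) (hF : ∀ f ∈ F, ∀ x, f x ∈ Set.Icc (0 : ℝ) (H + 1))
    (n : ℕ) (hn : 1 ≤ n) (zs : Fin n → X)
    (lam : ℝ) (hlam0 : 0 < lam)
    (ε : ℝ) (hε : ε ∈ Set.Ioc (0 : ℝ) 1) (δ : ℝ) (hδ : δ ∈ Set.Ioo (0 : ℝ) 1)
    (N : ℕ) (hN : IsCoverNum F ((ε / 72) * Real.sqrt (lam * δ / (n : ℝ))) N)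
    (p : Fin n → ℝ)
    (hp : ∀ i, IsSamplingProb
      (sensitivity F lam (Multiset.map zs Finset.univ.val) (zs i))
      (72 * Real.log (4 * (N : ℝ) / δ) / ε ^ 2) (p i))
    (B : Fin n → Ω → ℝ) (hmeas : ∀ i, Measurable (B i))
    (hval : ∀ i ω, B i ω = 0 ∨ B i ω = 1)
    (hber : ∀ i, μ {ω | B i ω = 1} = ENNReal.ofReal (p i))
    (hindep : iIndepFun B μ) :
    ENNReal.ofReal (1 - δ / 4) ≤
      μ {ω | ∑ i, B i ω / p i ≤ 4 * (n : ℝ) / δ} :=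
  subsample_size_bound_general μ F n hn zs lam ε δ hδ N p hp B hmeas hval hber
end

section
/- Let X be a set, H ≥ 1 an integer, F a class of functions from X to [0, H+1], Z a nonempty finite multiset of elements of X, λ > 0, ε ∈ (0,1), δ ∈ (0,1), and suppose N := N(F, (ε/72)·√(λδ/|Z|)) is finite. Perform sensitivity subsampling of Z with parameters (λ, ε, δ). Then for any fixed pair f, f' ∈ F with ‖f − f'‖²_Z ≥ λ, the probability that |‖f − f'‖²_{Z'} − ‖f − f'‖²_Z| ≥ (ε/4)·‖f − f'‖²_Z is at most (δ/4)/N². -/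
open MeasureTheory ProbabilityTheory


/-!
Write `d i = f (zs i) - f' (zs i)` and `S = ∑ i, d i ^ 2`. The subsampled norm is `∑ i, B i * a i`
with importance weights `a i = d i ^ 2 / p i`, whose mean is `∑ i, p i * a i = S`. Since
`d i ^ 2 / S` is at most the sensitivity of `zs i`, the choice of `p i` forces every weight that is
not kept surely to satisfy `a i ≤ S / κ`, where `κ = 72 log (4N/δ) / ε²`. For Bernoulli sums with
such bounded weights, `exp u ≤ 1 + u + 5/9 u²` on `|u| ≤ 1/5` gives the Bernstein-type bound
`mgf t ≤ exp (t S + 5/9 (S/κ) S t²)` for `|t| S / κ ≤ 1/5`, and the Chernoff bound at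
`t = ± ε κ / (5 S)` bounds each tail by `exp (-ε² κ / 36) = (δ / (4N))²`.
-/

open Real

/-- The final Chernoff exponent reaches `-2 log (4N/δ)` only if the coefficient of `u ^ 2` here is
at most `9 / 16`, so the usual bound with coefficient `1` is too weak. -/
lemma Real.exp_le_one_add_add_sq_of_abs_le {u : ℝ} (hu : |u| ≤ 1 / 5) :
    exp u ≤ 1 + u + 5 / 9 * u ^ 2 := by
  have h := (abs_sub_le_iff.1 (Real.exp_bound (hu.trans (by norm_num)) (n := 3) (by norm_num))).1
  have hcube : |u| ^ 3 ≤ 1 / 5 * u ^ 2 := by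
    rw [pow_succ', ← sq_abs u]
    exact mul_le_mul_of_nonneg_right hu (sq_nonneg _)
  simp only [Finset.sum_range_succ, Finset.sum_range_zero, Nat.factorial] at h
  norm_num at h
  nlinarith

lemma Real.exp_mul_eq_one_add_mul_of_eq_zero_or_eq_one {b : ℝ} (hb : b = 0 ∨ b = 1) (c : ℝ) :
    exp (b * c) = 1 + b * (exp c - 1) := by
  rcases hb with rfl | rfl <;> simp

namespace ProbabilityTheory

variable {Ω : Type*} [MeasurableSpace Ω] {μ : Measure Ω}

section Bernoulli

variable {B : Ω → ℝ} {q : ℝ}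

lemma integral_eq_of_eq_zero_or_eq_one (hB : Measurable B) (hval : ∀ ω, B ω = 0 ∨ B ω = 1)
    (hq : 0 ≤ q) (hber : μ {ω | B ω = 1} = ENNReal.ofReal q) :
    ∫ ω, B ω ∂μ = q := by
  have hind : B = Set.indicator {ω | B ω = 1} 1 := by
    funext ω
    rcases hval ω with h | h <;> simp [h]
  have hmeas : MeasurableSet {ω | B ω = 1} := hB (measurableSet_singleton 1)
  rw [hind, integral_indicator_one hmeas, measureReal_def, hber,
    ENNReal.toReal_ofReal hq]

lemma integrable_of_eq_zero_or_eq_one [IsFiniteMeasure μ] (hB : Measurable B)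
    (hval : ∀ ω, B ω = 0 ∨ B ω = 1) : Integrable B μ :=
  .of_bound hB.aestronglyMeasurable 1
    (ae_of_all _ fun ω => by rcases hval ω with h | h <;> simp [h])

lemma integrable_exp_mul_mul_of_eq_zero_or_eq_one [IsFiniteMeasure μ] (hB : Measurable B)
    (hval : ∀ ω, B ω = 0 ∨ B ω = 1) (a t : ℝ) :
    Integrable (fun ω => exp (t * (B ω * a))) μ := by
  simp_rw [mul_left_comm t, exp_mul_eq_one_add_mul_of_eq_zero_or_eq_one (hval _)]
  exact (integrable_const 1).add ((integrable_of_eq_zero_or_eq_one hB hval).mul_const _)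

lemma mgf_mul_of_eq_zero_or_eq_one [IsProbabilityMeasure μ] (hB : Measurable B)
    (hval : ∀ ω, B ω = 0 ∨ B ω = 1) (hq : 0 ≤ q) (hber : μ {ω | B ω = 1} = ENNReal.ofReal q)
    (a t : ℝ) :
    mgf (fun ω => B ω * a) μ t = 1 + q * (exp (t * a) - 1) := by
  simp only [mgf, mul_left_comm t, exp_mul_eq_one_add_mul_of_eq_zero_or_eq_one (hval _)]
  rw [integral_add (integrable_const 1) ((integrable_of_eq_zero_or_eq_one hB hval).mul_const _),
    integral_mul_const, integral_eq_of_eq_zero_or_eq_one hB hval hq hber]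
  simp

lemma mgf_mul_le_of_eq_zero_or_eq_one [IsProbabilityMeasure μ] (hB : Measurable B)
    (hval : ∀ ω, B ω = 0 ∨ B ω = 1) (hq : 0 ≤ q) (hber : μ {ω | B ω = 1} = ENNReal.ofReal q)
    {a M t : ℝ} (ha : 0 ≤ a) (hM : 0 ≤ M) (hqa : q = 1 ∨ a ≤ M) (ht : |t| * M ≤ 1 / 5) :
    mgf (fun ω => B ω * a) μ t ≤ exp (t * (q * a) + 5 / 9 * M * (q * a) * t ^ 2) := by
  rw [mgf_mul_of_eq_zero_or_eq_one hB hval hq hber]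
  rcases hqa with rfl | haM
  · rw [one_mul, one_mul, add_sub_cancel]
    exact exp_le_exp.2 (le_add_of_nonneg_right (by positivity))
  have hu : |t * a| ≤ 1 / 5 := by
    rw [abs_mul, abs_of_nonneg ha]
    exact (mul_le_mul_of_nonneg_left haM (abs_nonneg t)).trans ht
  have hsq : q * (t * a) ^ 2 ≤ M * (q * a) * t ^ 2 := by
    have : 0 ≤ q * t ^ 2 * a := by positivity
    nlinarith
  calc 1 + q * (exp (t * a) - 1) ≤ 1 + q * (t * a + 5 / 9 * (t * a) ^ 2) := by
        have := exp_le_one_add_add_sq_of_abs_le hu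
        gcongr
        linarith
    _ ≤ exp (q * (t * a + 5 / 9 * (t * a) ^ 2)) := by
        linarith [add_one_le_exp (q * (t * a + 5 / 9 * (t * a) ^ 2))]
    _ ≤ exp (t * (q * a) + 5 / 9 * M * (q * a) * t ^ 2) := exp_le_exp.2 (by nlinarith)

end Bernoulli

lemma measure_le_abs_sub_le_two_mul_exp [IsFiniteMeasure μ] {X : Ω → ℝ} {m c t : ℝ} (u : ℝ)
    (ht : 0 ≤ t) (hint_pos : Integrable (fun ω => exp (t * X ω)) μ)
    (hint_neg : Integrable (fun ω => exp (-t * X ω)) μ)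
    (hmgf_pos : mgf X μ t ≤ exp (t * m + c * t ^ 2))
    (hmgf_neg : mgf X μ (-t) ≤ exp (-t * m + c * t ^ 2)) :
    μ {ω | u ≤ |X ω - m|} ≤ ENNReal.ofReal (2 * exp (-t * u + c * t ^ 2)) := by
  have hupper : μ.real {ω | m + u ≤ X ω} ≤ exp (-t * u + c * t ^ 2) :=
    calc μ.real {ω | m + u ≤ X ω} ≤ exp (-t * (m + u)) * exp (t * m + c * t ^ 2) :=
          (measure_ge_le_exp_mul_mgf _ ht hint_pos).trans (by gcongr)
      _ = exp (-t * u + c * t ^ 2) := by rw [← exp_add]; ring_nf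
  have hlower : μ.real {ω | X ω ≤ m - u} ≤ exp (-t * u + c * t ^ 2) :=
    calc μ.real {ω | X ω ≤ m - u} ≤ exp (-(-t) * (m - u)) * exp (-t * m + c * t ^ 2) :=
          (measure_le_le_exp_mul_mgf _ (neg_nonpos.2 ht) hint_neg).trans (by gcongr)
      _ = exp (-t * u + c * t ^ 2) := by rw [← exp_add]; ring_nf
  have hsub : {ω | u ≤ |X ω - m|} ⊆ {ω | m + u ≤ X ω} ∪ {ω | X ω ≤ m - u} := by
    intro ω hω
    rcases le_abs'.1 (show u ≤ |X ω - m| from hω) with h | h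
    · exact Or.inr (show X ω ≤ m - u by linarith)
    · exact Or.inl (show m + u ≤ X ω by linarith)
  rw [ENNReal.le_ofReal_iff_toReal_le (measure_ne_top _ _) (by positivity)]
  calc μ.real {ω | u ≤ |X ω - m|} ≤ μ.real ({ω | m + u ≤ X ω} ∪ {ω | X ω ≤ m - u}) :=
        measureReal_mono hsub
    _ ≤ μ.real {ω | m + u ≤ X ω} + μ.real {ω | X ω ≤ m - u} := measureReal_union_le _ _
    _ ≤ 2 * exp (-t * u + c * t ^ 2) := by linarith

section BernoulliSum

variable {ι : Type*} {B : ι → Ω → ℝ} {q : ι → ℝ}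

lemma iIndepFun.mul_const (hindep : iIndepFun B μ) (a : ι → ℝ) :
    iIndepFun (fun i ω => B i ω * a i) μ :=
  hindep.comp (fun i x => x * a i) fun i => measurable_id.mul_const (a i)

variable [Fintype ι]

lemma integrable_exp_mul_sum_mul_of_eq_zero_or_eq_one [IsFiniteMeasure μ]
    (hB : ∀ i, Measurable (B i)) (hval : ∀ i ω, B i ω = 0 ∨ B i ω = 1)
    (hindep : iIndepFun B μ) (a : ι → ℝ) (t : ℝ) :
    Integrable (fun ω => exp (t * ∑ i, B i ω * a i)) μ := by
  have h := (hindep.mul_const a).integrable_exp_mul_sum (fun i => (hB i).mul_const (a i))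
    (s := Finset.univ) fun i _ =>
      integrable_exp_mul_mul_of_eq_zero_or_eq_one (hB i) (hval i) (a i) t
  simpa only [Finset.sum_apply] using h

lemma mgf_sum_mul_le_of_eq_zero_or_eq_one [IsProbabilityMeasure μ]
    (hB : ∀ i, Measurable (B i)) (hval : ∀ i ω, B i ω = 0 ∨ B i ω = 1) (hq : ∀ i, 0 ≤ q i)
    (hber : ∀ i, μ {ω | B i ω = 1} = ENNReal.ofReal (q i)) (hindep : iIndepFun B μ)
    {a : ι → ℝ} {M t : ℝ} (ha : ∀ i, 0 ≤ a i) (hM : 0 ≤ M) (hqa : ∀ i, q i = 1 ∨ a i ≤ M)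
    (ht : |t| * M ≤ 1 / 5) :
    mgf (fun ω => ∑ i, B i ω * a i) μ t ≤
      exp (t * ∑ i, q i * a i + 5 / 9 * M * (∑ i, q i * a i) * t ^ 2) := by
  have hsum : (fun ω => ∑ i, B i ω * a i) = ∑ i, fun ω => B i ω * a i := by
    funext ω
    simp only [Finset.sum_apply]
  rw [hsum, (hindep.mul_const a).mgf_sum (fun i => (hB i).mul_const _), Finset.mul_sum,
    Finset.mul_sum, Finset.sum_mul, ← Finset.sum_add_distrib, exp_sum]
  exact Finset.prod_le_prod (fun i _ => mgf_nonneg) fun i _ =>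
    mgf_mul_le_of_eq_zero_or_eq_one (hB i) (hval i) (hq i) (hber i) (ha i) hM (hqa i) ht

lemma measure_le_abs_sum_mul_sub_le [IsProbabilityMeasure μ]
    (hB : ∀ i, Measurable (B i)) (hval : ∀ i ω, B i ω = 0 ∨ B i ω = 1) (hq : ∀ i, 0 ≤ q i)
    (hber : ∀ i, μ {ω | B i ω = 1} = ENNReal.ofReal (q i)) (hindep : iIndepFun B μ)
    {a : ι → ℝ} {M η : ℝ} (ha : ∀ i, 0 ≤ a i) (hM : 0 < M) (hqa : ∀ i, q i = 1 ∨ a i ≤ M)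
    (hη : 0 ≤ η) (hη' : η ≤ 1 / 4) :
    μ {ω | η * (∑ i, q i * a i) ≤ |∑ i, B i ω * a i - ∑ i, q i * a i|} ≤
      ENNReal.ofReal (2 * exp (-(4 * η ^ 2 * (∑ i, q i * a i) / (9 * M)))) := by
  have hmgf : ∀ t, |t| * M ≤ 1 / 5 → _ := fun t ht =>
    mgf_sum_mul_le_of_eq_zero_or_eq_one hB hval hq hber hindep ha hM.le hqa ht
  have ht : |4 * η / (5 * M)| * M ≤ 1 / 5 := by
    rw [abs_of_nonneg (by positivity)]
    field_simp
    linarith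
  calc _ ≤ ENNReal.ofReal (2 * exp (-(4 * η / (5 * M)) * (η * ∑ i, q i * a i) +
        5 / 9 * M * (∑ i, q i * a i) * (4 * η / (5 * M)) ^ 2)) :=
        measure_le_abs_sub_le_two_mul_exp _ (by positivity)
          (integrable_exp_mul_sum_mul_of_eq_zero_or_eq_one hB hval hindep a _)
          (integrable_exp_mul_sum_mul_of_eq_zero_or_eq_one hB hval hindep a _)
          (hmgf _ ht) (by rw [← neg_sq]; exact hmgf _ (by rwa [abs_neg]))
    _ = _ := by
        congr 3
        field_simp
        ring

end BernoulliSum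

end ProbabilityTheory

lemma msNormSq_map {X ι : Type*} (s : Finset ι) (zs : ι → X) (g : X → ℝ) :
    msNormSq (s.val.map zs) g = ∑ i ∈ s, g (zs i) ^ 2 := by
  rw [msNormSq, Multiset.map_map]
  rfl

lemma div_msNormSq_le_sensitivity {X : Type*} {F : Set (X → ℝ)} {C lam : ℝ}
    (hF : ∀ f ∈ F, ∀ x, f x ∈ Set.Icc 0 C) (hlam : 0 < lam) {Z : Multiset X} {f f' : X → ℝ}
    (hf : f ∈ F) (hf' : f' ∈ F) (hsep : lam ≤ msNormSq Z (fun x => f x - f' x)) (z : X) :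
    (f z - f' z) ^ 2 / msNormSq Z (fun x => f x - f' x) ≤ sensitivity F lam Z z := by
  refine le_csSup ⟨C ^ 2 / lam, ?_⟩ ⟨f, hf, f', hf', hsep, rfl⟩
  rintro r ⟨g, hg, g', hg', hsep', rfl⟩
  obtain ⟨hg0, hgC⟩ := hF g hg z
  obtain ⟨hg'0, hg'C⟩ := hF g' hg' z
  exact div_le_div₀ (by positivity) (by nlinarith) hlam hsep'

lemma IsCoverNum.one_le {X : Type*} {F : Set (X → ℝ)} {ε : ℝ} {N : ℕ} (hN : IsCoverNum F ε N)
    {f : X → ℝ} (hf : f ∈ F) : 1 ≤ N := by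
  obtain ⟨C, -, hcover, rfl⟩ := hN.1
  obtain ⟨g, hg, -⟩ := hcover f hf
  exact Finset.card_pos.2 ⟨g, hg⟩

namespace IsSamplingProb

variable {s κ p : ℝ}

lemma pos_s5 (hp : IsSamplingProb s κ p) : 0 < p := by
  obtain ⟨⟨m, hm, rfl⟩, -⟩ := hp.1
  positivity

lemma le_one (hp : IsSamplingProb s κ p) : p ≤ 1 :=
  hp.2 ⟨⟨1, one_pos, by norm_num⟩, min_le_left _ _⟩

lemma eq_one_or_mul_le (hp : IsSamplingProb s κ p) : p = 1 ∨ s * κ ≤ p := by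
  rcases min_choice 1 (s * κ) with h | h
  · exact Or.inl (hp.le_one.antisymm (h ▸ hp.1.2))
  · exact Or.inr (h ▸ hp.1.2)

lemma eq_one_or_div_le_div (hp : IsSamplingProb s κ p) (hκ : 0 < κ) {x S : ℝ} (hS : 0 < S)
    (hx : x / S ≤ s) : p = 1 ∨ x / p ≤ S / κ := by
  refine hp.eq_one_or_mul_le.imp_right fun h => ?_
  rw [div_le_div_iff₀ hp.pos_s5 hκ, ← div_le_iff₀' hS, mul_div_right_comm]
  calc x / S * κ ≤ s * κ := by gcongr
    _ ≤ p := h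

end IsSamplingProb

lemma two_mul_exp_neg_two_mul_log_le {δ N : ℝ} (hδ : 0 < δ) (hδ2 : δ ≤ 2) (hN : 0 < N) :
    2 * exp (-(2 * log (4 * N / δ))) ≤ δ / 4 / N ^ 2 := by
  rw [exp_neg, ← Nat.cast_ofNat, exp_nat_mul, exp_log (by positivity)]
  field_simp
  push_cast
  nlinarith

theorem subsample_fixed_pair_concentration_general {X : Type*} {Ω : Type*} [MeasurableSpace Ω]
    (μ : Measure Ω) [IsProbabilityMeasure μ]
    (H : ℕ)
    (F : Set (X → ℝ)) (hF : ∀ f ∈ F, ∀ x, f x ∈ Set.Icc (0 : ℝ) (H + 1))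
    (n : ℕ) (zs : Fin n → X)
    (lam : ℝ) (hlam0 : 0 < lam)
    (ε : ℝ) (hε : ε ∈ Set.Ioo (0 : ℝ) 1) (δ : ℝ) (hδ : δ ∈ Set.Ioo (0 : ℝ) 1)
    (N : ℕ) (hN : IsCoverNum F ((ε / 72) * Real.sqrt (lam * δ / (n : ℝ))) N)
    (p : Fin n → ℝ)
    (hp : ∀ i, IsSamplingProb
      (sensitivity F lam (Multiset.map zs Finset.univ.val) (zs i))
      (72 * Real.log (4 * (N : ℝ) / δ) / ε ^ 2) (p i))
    (B : Fin n → Ω → ℝ) (hmeas : ∀ i, Measurable (B i))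
    (hval : ∀ i ω, B i ω = 0 ∨ B i ω = 1)
    (hber : ∀ i, μ {ω | B i ω = 1} = ENNReal.ofReal (p i))
    (hindep : iIndepFun B μ)
    (f f' : X → ℝ) (hf : f ∈ F) (hf' : f' ∈ F)
    (hsep : lam ≤ msNormSq (Multiset.map zs Finset.univ.val) (fun x => f x - f' x)) :
    μ {ω | (ε / 4) * msNormSq (Multiset.map zs Finset.univ.val) (fun x => f x - f' x) ≤
        |(∑ i, (B i ω / p i) * (f (zs i) - f' (zs i)) ^ 2) -
          msNormSq (Multiset.map zs Finset.univ.val) (fun x => f x - f' x)|} ≤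
      ENNReal.ofReal ((δ / 4) / (N : ℝ) ^ 2) := by
  obtain ⟨hε0, hε1⟩ := hε
  obtain ⟨hδ0, hδ1⟩ := hδ
  have hsens := fun i => div_msNormSq_le_sensitivity hF hlam0 hf hf' hsep (zs i)
  rw [msNormSq_map] at hsep hsens ⊢
  set S := ∑ i, (f (zs i) - f' (zs i)) ^ 2
  set L := log (4 * N / δ)
  set κ := 72 * L / ε ^ 2
  have hN1 : (1 : ℝ) ≤ N := by exact_mod_cast hN.one_le hf
  have hκ : 0 < κ := by
    have : 0 < L := log_pos (by rw [lt_div_iff₀ hδ0]; linarith)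
    positivity
  have hS : 0 < S := hlam0.trans_le hsep
  set a := fun i => (f (zs i) - f' (zs i)) ^ 2 / p i
  have hqa : ∀ i, p i = 1 ∨ a i ≤ S / κ := fun i =>
    (hp i).eq_one_or_div_le_div hκ hS (hsens i)
  have hmean : ∑ i, p i * a i = S :=
    Finset.sum_congr rfl fun i _ => mul_div_cancel₀ _ (hp i).pos_s5.ne'
  have hweights : ∀ ω, ∑ i, B i ω / p i * (f (zs i) - f' (zs i)) ^ 2 = ∑ i, B i ω * a i :=
    fun ω => Finset.sum_congr rfl fun i _ => mul_comm_div _ _ _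
  simp_rw [hweights]
  rw [← hmean]
  calc _ ≤ ENNReal.ofReal (2 * exp (-(4 * (ε / 4) ^ 2 * (∑ i, p i * a i) / (9 * (S / κ))))) :=
        measure_le_abs_sum_mul_sub_le hmeas hval (fun i => (hp i).pos_s5.le) hber hindep
          (fun i => div_nonneg (sq_nonneg _) (hp i).pos_s5.le) (div_pos hS hκ) hqa (by positivity)
          (by linarith)
    _ = ENNReal.ofReal (2 * exp (-(2 * L))) := by
        rw [hmean]
        congr 3
        simp only [κ]
        field_simp
        ring
    _ ≤ _ := ENNReal.ofReal_le_ofReal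
        (two_mul_exp_neg_two_mul_log_le hδ0 (by linarith) (by linarith))

/-- for a fixed pair `f, f' ∈ F` with `‖f − f'‖²_Z ≥ λ`, the probability that
`|‖f − f'‖²_{Z'} − ‖f − f'‖²_Z| ≥ (ε/4)·‖f − f'‖²_Z` is at most `(δ/4)/N²`. -/
theorem subsample_fixed_pair_concentration {X : Type*} {Ω : Type*} [MeasurableSpace Ω]
    (μ : Measure Ω) [IsProbabilityMeasure μ]
    (H : ℕ) (hH : 1 ≤ H)
    (F : Set (X → ℝ)) (hF : ∀ f ∈ F, ∀ x, f x ∈ Set.Icc (0 : ℝ) (H + 1))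
    (n : ℕ) (hn : 1 ≤ n) (zs : Fin n → X)
    (lam : ℝ) (hlam0 : 0 < lam)
    (ε : ℝ) (hε : ε ∈ Set.Ioo (0 : ℝ) 1) (δ : ℝ) (hδ : δ ∈ Set.Ioo (0 : ℝ) 1)
    (N : ℕ) (hN : IsCoverNum F ((ε / 72) * Real.sqrt (lam * δ / (n : ℝ))) N)
    (p : Fin n → ℝ)
    (hp : ∀ i, IsSamplingProb
      (sensitivity F lam (Multiset.map zs Finset.univ.val) (zs i))
      (72 * Real.log (4 * (N : ℝ) / δ) / ε ^ 2) (p i))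
    (B : Fin n → Ω → ℝ) (hmeas : ∀ i, Measurable (B i))
    (hval : ∀ i ω, B i ω = 0 ∨ B i ω = 1)
    (hber : ∀ i, μ {ω | B i ω = 1} = ENNReal.ofReal (p i))
    (hindep : iIndepFun B μ)
    (f f' : X → ℝ) (hf : f ∈ F) (hf' : f' ∈ F)
    (hsep : lam ≤ msNormSq (Multiset.map zs Finset.univ.val) (fun x => f x - f' x)) :
    μ {ω | (ε / 4) * msNormSq (Multiset.map zs Finset.univ.val) (fun x => f x - f' x) ≤
        |(∑ i, (B i ω / p i) * (f (zs i) - f' (zs i)) ^ 2) -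
          msNormSq (Multiset.map zs Finset.univ.val) (fun x => f x - f' x)|} ≤
      ENNReal.ofReal ((δ / 4) / (N : ℝ) ^ 2) :=
  subsample_fixed_pair_concentration_general μ H F hF n zs lam hlam0 ε hε δ hδ N hN p hp B hmeas
    hval hber hindep f f' hf hf' hsep
end

section
/- Let X be a set, H ≥ 1 an integer, F a class of functions from X to [0, H+1], T ≥ 1, δ ∈ (0,1), and set γ := 1/(8·√(4T/δ)). Let Z and Z̄ be finite multisets of elements of X with |Z̄| ≤ 4T/δ, and suppose that for all f, f' ∈ F: (1/2)·‖f − f'‖²_Z − 1/8 ≤ ‖f − f'‖²_{Z̄} ≤ (3/2)·‖f − f'‖²_Z + 1/2. Let f̄, f̂ ∈ F with sup_{x∈X}|f̄(x) − f̂(x)| ≤ γ, and let Ẑ be the multiset obtained from Z̄ by replacing each copy of z ∈ Z̄ by a point ẑ ∈ X satisfying |f(z) − f(ẑ)| ≤ γ for every f ∈ F. Then for every β ≥ 0, with F̂ := {f ∈ F : ‖f − f̂‖²_{Ẑ} ≤ 3β + 2}, one has {f ∈ F : ‖f − f̄‖²_Z ≤ β} ⊆ F̂ ⊆ {f ∈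 F : ‖f − f̄‖²_Z ≤ 12(β + 1)}; consequently, for every x ∈ X, w({f ∈ F : ‖f − f̄‖²_Z ≤ β}, x) ≤ w(F̂, x) ≤ w({f ∈ F : ‖f − f̄‖²_Z ≤ 12(β + 1)}, x). -/
/-- The width of a set of functions `G` at a point `x`:
`w(G, x) = sup_{f, f' ∈ G} (f(x) − f'(x))`. -/
noncomputable def width {X : Type*} (G : Set (X → ℝ)) (x : X) : ℝ :=
  sSup {r : ℝ | ∃ f ∈ G, ∃ f' ∈ G, r = f x - f' x}

section msNormSq

variable {X Y : Type*}

lemma msNormSq_map_s7 (P : Multiset Y) (φ : Y → X) (g : X → ℝ) :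
    msNormSq (P.map φ) g = msNormSq P (g ∘ φ) := by
  simp only [msNormSq, Multiset.map_map, Function.comp_def]

lemma msNormSq_le_two_mul_add_of_abs_sub_le {P : Multiset Y} {u v : Y → ℝ} {ε : ℝ}
    (h : ∀ p ∈ P, |u p - v p| ≤ ε) :
    msNormSq P u ≤ 2 * msNormSq P v + 2 * Multiset.card P * ε ^ 2 := by
  induction P using Multiset.induction with
  | empty => simp [msNormSq]
  | cons a s ih =>
    obtain ⟨hlo, hhi⟩ := abs_le.mp (h a (s.mem_cons_self a))
    have ha : (u a - v a) ^ 2 ≤ ε ^ 2 := sq_le_sq' hlo hhi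
    have hs := ih fun p hp => h p (Multiset.mem_cons_of_mem hp)
    simp only [msNormSq, Multiset.map_cons, Multiset.sum_cons, Multiset.card_cons] at hs ⊢
    push_cast
    nlinarith [sq_nonneg (u a - 2 * v a)]

lemma msNormSq_map_snd_le {P : Multiset (X × X)} {u v : X → ℝ} {ε : ℝ}
    (h : ∀ q ∈ P, |u q.2 - v q.1| ≤ ε) :
    msNormSq (P.map Prod.snd) u ≤
      2 * msNormSq (P.map Prod.fst) v + 2 * Multiset.card P * ε ^ 2 := by
  rw [msNormSq_map_s7, msNormSq_map_s7]
  exact msNormSq_le_two_mul_add_of_abs_sub_le h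

lemma msNormSq_map_fst_le {P : Multiset (X × X)} {u v : X → ℝ} {ε : ℝ}
    (h : ∀ q ∈ P, |u q.2 - v q.1| ≤ ε) :
    msNormSq (P.map Prod.fst) v ≤
      2 * msNormSq (P.map Prod.snd) u + 2 * Multiset.card P * ε ^ 2 := by
  rw [msNormSq_map_s7, msNormSq_map_s7]
  exact msNormSq_le_two_mul_add_of_abs_sub_le fun q hq => abs_sub_comm (u q.2) _ ▸ h q hq

end msNormSq

-- For `c ≤ 0` the left side vanishes through `√c = 0` and `1 / 0 = 0`.
lemma mul_one_div_eight_mul_sqrt_sq_le {n c : ℝ} (hn : n ≤ c) :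
    n * (1 / (8 * √c)) ^ 2 ≤ 1 / 64 := by
  rcases le_or_gt c 0 with hc | hc
  · simp [Real.sqrt_eq_zero'.mpr hc]
  · rw [div_pow, mul_pow, Real.sq_sqrt hc.le, one_pow, ← div_eq_mul_one_div,
      div_le_div_iff₀ (by positivity) (by norm_num)]
    linarith

lemma abs_rounding_error_le {X : Type*} {F : Set (X → ℝ)} {fbar fhat f : X → ℝ}
    {pairs : Multiset (X × X)} {γ : ℝ} (hfhat : fhat ∈ F) (hf : f ∈ F)
    (hclose : ∀ x, |fbar x - fhat x| ≤ γ) (hround : ∀ q ∈ pairs, ∀ f ∈ F, |f q.1 - f q.2| ≤ γ)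
    {q : X × X} (hq : q ∈ pairs) :
    |(f q.2 - fhat q.2) - (f q.1 - fbar q.1)| ≤ 3 * γ := by
  have h₁ := abs_sub_comm (f q.1) (f q.2) ▸ hround q hq f hf
  have h₂ := hround q hq fhat hfhat
  have h₃ := hclose q.1
  calc |(f q.2 - fhat q.2) - (f q.1 - fbar q.1)|
      = |(f q.2 - f q.1) + (fhat q.1 - fhat q.2) + (fbar q.1 - fhat q.1)| := by ring_nf
    _ ≤ |f q.2 - f q.1| + |fhat q.1 - fhat q.2| + |fbar q.1 - fhat q.1| := abs_add_three _ _ _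
    _ ≤ 3 * γ := by linarith

lemma width_nonneg {X : Type*} (G : Set (X → ℝ)) (x : X) : 0 ≤ width G x := by
  rcases G.eq_empty_or_nonempty with rfl | ⟨f, hf⟩
  · simp [width]
  · exact Real.sSup_nonneg' ⟨0, ⟨f, hf, f, hf, (sub_self _).symm⟩, le_rfl⟩

lemma width_mono {X : Type*} {S T : Set (X → ℝ)} {x : X} {a b : ℝ} (hST : S ⊆ T)
    (hT : ∀ f ∈ T, f x ∈ Set.Icc a b) :
    width S x ≤ width T x := by
  have hbdd : BddAbove {r : ℝ | ∃ f ∈ T, ∃ f' ∈ T, r = f x - f' x} := by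
    refine ⟨b - a, ?_⟩
    rintro r ⟨f, hf, f', hf', rfl⟩
    linarith [(hT f hf).2, (hT f' hf').1]
  refine Real.sSup_le ?_ (width_nonneg T x)
  rintro r ⟨f, hf, f', hf', rfl⟩
  exact le_csSup hbdd ⟨f, hST hf, f', hST hf', rfl⟩

theorem rounded_confidence_region_sandwich_general {X : Type*} (H : ℕ)
    (F : Set (X → ℝ)) (hF : ∀ f ∈ F, ∀ x, f x ∈ Set.Icc (0 : ℝ) ((H : ℝ) + 1))
    (T : ℕ) (δ : ℝ)
    (Z Zbar Zhat : Multiset X)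
    (hcard : (Multiset.card Zbar : ℝ) ≤ 4 * (T : ℝ) / δ)
    (happrox : ∀ f ∈ F, ∀ f' ∈ F,
      (1 / 2) * msNormSq Z (fun x => f x - f' x) - 1 / 8 ≤
          msNormSq Zbar (fun x => f x - f' x) ∧
        msNormSq Zbar (fun x => f x - f' x) ≤
          (3 / 2) * msNormSq Z (fun x => f x - f' x) + 1 / 2)
    (fbar fhat : X → ℝ) (hfbar : fbar ∈ F) (hfhat : fhat ∈ F)
    (hclose : ∀ x, |fbar x - fhat x| ≤ 1 / (8 * Real.sqrt (4 * (T : ℝ) / δ)))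
    (pairs : Multiset (X × X))
    (hfst : pairs.map Prod.fst = Zbar) (hsnd : pairs.map Prod.snd = Zhat)
    (hround : ∀ q ∈ pairs, ∀ f ∈ F, |f q.1 - f q.2| ≤ 1 / (8 * Real.sqrt (4 * (T : ℝ) / δ))) :
    ∀ β : ℝ, 0 ≤ β →
      ({f ∈ F | msNormSq Z (fun x => f x - fbar x) ≤ β} ⊆
          {f ∈ F | msNormSq Zhat (fun x => f x - fhat x) ≤ 3 * β + 2}) ∧
      ({f ∈ F | msNormSq Zhat (fun x => f x - fhat x) ≤ 3 * β + 2} ⊆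
          {f ∈ F | msNormSq Z (fun x => f x - fbar x) ≤ 12 * (β + 1)}) ∧
      (∀ x : X,
        width {f ∈ F | msNormSq Z (fun x => f x - fbar x) ≤ β} x ≤
            width {f ∈ F | msNormSq Zhat (fun x => f x - fhat x) ≤ 3 * β + 2} x ∧
          width {f ∈ F | msNormSq Zhat (fun x => f x - fhat x) ≤ 3 * β + 2} x ≤
            width {f ∈ F | msNormSq Z (fun x => f x - fbar x) ≤ 12 * (β + 1)} x) := by
  intro β _
  subst hfst hsnd
  have herror : 2 * Multiset.card pairs * (3 * (1 / (8 * √(4 * T / δ)))) ^ 2 ≤ 9 / 32 := by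
    have := mul_one_div_eight_mul_sqrt_sq_le (Multiset.card_map Prod.fst pairs ▸ hcard)
    nlinarith
  have hsnd_le : ∀ f ∈ F, msNormSq (pairs.map Prod.snd) (fun x => f x - fhat x) ≤
      2 * msNormSq (pairs.map Prod.fst) (fun x => f x - fbar x) + 9 / 32 := fun f hf => by
    linarith [msNormSq_map_snd_le (u := fun x => f x - fhat x) (v := fun x => f x - fbar x)
      fun q => abs_rounding_error_le hfhat hf hclose hround (q := q)]
  have hfst_le : ∀ f ∈ F, msNormSq (pairs.map Prod.fst) (fun x => f x - fbar x) ≤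
      2 * msNormSq (pairs.map Prod.snd) (fun x => f x - fhat x) + 9 / 32 := fun f hf => by
    linarith [msNormSq_map_fst_le (u := fun x => f x - fhat x) (v := fun x => f x - fbar x)
      fun q => abs_rounding_error_le hfhat hf hclose hround (q := q)]
  have hsub₁ : {f ∈ F | msNormSq Z (fun x => f x - fbar x) ≤ β} ⊆
      {f ∈ F | msNormSq (pairs.map Prod.snd) (fun x => f x - fhat x) ≤ 3 * β + 2} :=
    fun f ⟨hf, hβ⟩ => ⟨hf, by linarith [hsnd_le f hf, (happrox f hf fbar hfbar).2]⟩
  have hsub₂ : {f ∈ F | msNormSq (pairs.map Prod.snd) (fun x => f x - fhat x) ≤ 3 * β + 2} ⊆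
      {f ∈ F | msNormSq Z (fun x => f x - fbar x) ≤ 12 * (β + 1)} :=
    fun f ⟨hf, hβ⟩ => ⟨hf, by linarith [hfst_le f hf, (happrox f hf fbar hfbar).1]⟩
  exact ⟨hsub₁, hsub₂, fun x =>
    ⟨width_mono hsub₁ fun f hf => hF f hf.1 x, width_mono hsub₂ fun f hf => hF f hf.1 x⟩⟩

/-- Proposition 2 of the paper, deterministic part: the rounded confidence
region `F̂ = {f ∈ F : ‖f − f̂‖²_Ẑ ≤ 3β + 2}` is sandwiched between the confidence regions of
radius `β` and `12(β+1)` defined with the original dataset `Z` and reference function `f̄`,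
and consequently the same holds for the associated width (bonus) functions. -/
theorem rounded_confidence_region_sandwich {X : Type*} (H : ℕ) (hH : 1 ≤ H)
    (F : Set (X → ℝ)) (hF : ∀ f ∈ F, ∀ x, f x ∈ Set.Icc (0 : ℝ) ((H : ℝ) + 1))
    (T : ℕ) (hT : 1 ≤ T) (δ : ℝ) (hδ : δ ∈ Set.Ioo (0 : ℝ) 1)
    (Z Zbar Zhat : Multiset X)
    (hcard : (Multiset.card Zbar : ℝ) ≤ 4 * (T : ℝ) / δ)
    (happrox : ∀ f ∈ F, ∀ f' ∈ F,
      (1 / 2) * msNormSq Z (fun x => f x - f' x) - 1 / 8 ≤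
          msNormSq Zbar (fun x => f x - f' x) ∧
        msNormSq Zbar (fun x => f x - f' x) ≤
          (3 / 2) * msNormSq Z (fun x => f x - f' x) + 1 / 2)
    (fbar fhat : X → ℝ) (hfbar : fbar ∈ F) (hfhat : fhat ∈ F)
    (hclose : ∀ x, |fbar x - fhat x| ≤ 1 / (8 * Real.sqrt (4 * (T : ℝ) / δ)))
    (pairs : Multiset (X × X))
    (hfst : pairs.map Prod.fst = Zbar) (hsnd : pairs.map Prod.snd = Zhat)
    (hround : ∀ q ∈ pairs, ∀ f ∈ F, |f q.1 - f q.2| ≤ 1 / (8 * Real.sqrt (4 * (T : ℝ) / δ))) :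
    ∀ β : ℝ, 0 ≤ β →
      ({f ∈ F | msNormSq Z (fun x => f x - fbar x) ≤ β} ⊆
          {f ∈ F | msNormSq Zhat (fun x => f x - fhat x) ≤ 3 * β + 2}) ∧
      ({f ∈ F | msNormSq Zhat (fun x => f x - fhat x) ≤ 3 * β + 2} ⊆
          {f ∈ F | msNormSq Z (fun x => f x - fbar x) ≤ 12 * (β + 1)}) ∧
      (∀ x : X,
        width {f ∈ F | msNormSq Z (fun x => f x - fbar x) ≤ β} x ≤
            width {f ∈ F | msNormSq Zhat (fun x => f x - fhat x) ≤ 3 * β + 2} x ∧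
          width {f ∈ F | msNormSq Zhat (fun x => f x - fhat x) ≤ 3 * β + 2} x ≤
            width {f ∈ F | msNormSq Z (fun x => f x - fbar x) ≤ 12 * (β + 1)} x) :=
  rounded_confidence_region_sandwich_general H F hF T δ Z Zbar Zhat hcard happrox fbar fhat hfbar
    hfhat hclose pairs hfst hsnd hround
end

section
/- Let S and A be finite nonempty sets, H ≥ 1 an integer, r : S×A → [0,1], and P(·|s,a) a probability distribution on S for each (s,a) ∈ S×A. Define the optimal value functions by V*_{H+1} ≡ 0 and, for h = H, …, 1, Q*_h(s,a) = r(s,a) + ∑_{s'∈S} P(s'|s,a)·V*_{h+1}(s') and V*_h(s) = max_{a∈A} Q*_h(s,a). Let f_h : S×A → ℝ and b_h : S×A → [0,∞) for h ∈ {1,…,H}, and define Q_{H+1} ≡ 0, Q_h(s,a) := min{f_h(s,a) + b_h(s,a), H}, and V_h(s) := max_{a∈A} Q_h(s,a). Suppose that for every h ∈ {1,…,H} and every (s,a) ∈ S×A, |r(s,a) + ∑_{s'∈S} P(s'|s,a)·V_{h+1}(s') − f_h(s,a)| ≤ b_h(s,a). Then for every h ∈ {1,…,H} and every (s,a) ∈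 S×A: Q*_h(s,a) ≤ Q_h(s,a) ≤ r(s,a) + ∑_{s'∈S} P(s'|s,a)·V_{h+1}(s') + 2·b_h(s,a). -/
/-!
Optimism propagates backwards in `h`. Since `Q*_h` is the Bellman backup of `V*_{h+1}` and the
backup is monotone, `V*_{h+1} ≤ V_{h+1}` gives `Q*_h ≤ backup(V_{h+1}) ≤ f_h + b_h`; moreover
`V*_{h+1} ≤ H - h` (one reward of size at most `1` per remaining step), so `Q*_h ≤ H` and the
truncation at `H` preserves the inequality. Taking maxima over actions gives `V*_h ≤ V_h`.
The upper bound is immediate from `Q_h ≤ f_h + b_h ≤ backup(V_{h+1}) + 2 b_h`.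
-/

open Finset

section BellmanBackup

variable {S A : Type*} [Fintype S]

noncomputable def bellmanBackup (r : S → A → ℝ) (P : S → A → S → ℝ) (V : S → ℝ) (s : S) (a : A) :
    ℝ :=
  r s a + ∑ s', P s a s' * V s'

variable {r : S → A → ℝ} {P : S → A → S → ℝ} {s : S} {a : A}

lemma bellmanBackup_mono {V W : S → ℝ} (hP : ∀ s', 0 ≤ P s a s') (hVW : ∀ s', V s' ≤ W s') :
    bellmanBackup r P V s a ≤ bellmanBackup r P W s a := by
  unfold bellmanBackup
  gcongr with s'
  · exact hP s'
  · exact hVW s'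

lemma bellmanBackup_le_one_add {V : S → ℝ} {c : ℝ} (hr : r s a ≤ 1)
    (hP0 : ∀ s', 0 ≤ P s a s') (hP1 : ∑ s', P s a s' = 1) (hV : ∀ s', V s' ≤ c) :
    bellmanBackup r P V s a ≤ 1 + c := by
  have hexp : ∑ s', P s a s' * V s' ≤ c :=
    calc ∑ s', P s a s' * V s' ≤ ∑ s', P s a s' * c :=
          sum_le_sum fun s' _ => mul_le_mul_of_nonneg_left (hV s') (hP0 s')
      _ = c := by rw [← sum_mul, hP1, one_mul]
  unfold bellmanBackup
  linarith

end BellmanBackup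

lemma le_min_add_of_le_of_abs_sub_le {x y f b c : ℝ} (hyx : y ≤ x) (hyc : y ≤ c)
    (hf : |x - f| ≤ b) : y ≤ min (f + b) c :=
  le_min (by linarith [(abs_sub_le_iff.mp hf).1]) hyc

lemma min_add_le_add_two_mul_of_abs_sub_le {x f b c : ℝ} (hf : |x - f| ≤ b) :
    min (f + b) c ≤ x + 2 * b :=
  (min_le_left _ _).trans (by linarith [(abs_sub_le_iff.mp hf).2])

section Optimism

variable {S A : Type*} [Fintype S] [Fintype A] [Nonempty A] {H : ℕ}
  {r : S → A → ℝ} {P : S → A → S → ℝ} {Qstar : ℕ → S → A → ℝ} {Vstar : ℕ → S → ℝ}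

lemma optimalValue_le_horizon (hr : ∀ s a, r s a ≤ 1)
    (hP0 : ∀ s a s', 0 ≤ P s a s') (hP1 : ∀ s a, ∑ s', P s a s' = 1)
    (hVstarTop : ∀ s, Vstar (H + 1) s = 0)
    (hQstar : ∀ h ∈ Icc 1 H, ∀ s a, Qstar h s a = bellmanBackup r P (Vstar (h + 1)) s a)
    (hVstar : ∀ h ∈ Icc 1 H, ∀ s, Vstar h s = univ.sup' univ_nonempty (fun a => Qstar h s a)) :
    ∀ h ∈ Icc 1 (H + 1), ∀ s, Vstar h s ≤ (H : ℝ) + 1 - h := by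
  intro h hh
  obtain ⟨h1, hle⟩ := mem_Icc.mp hh
  refine Nat.decreasingInduction' (P := fun k => ∀ s, Vstar k s ≤ (H : ℝ) + 1 - k)
    (fun k hkH hhk ih => ?_) hle (by simp [hVstarTop])
  have hk : k ∈ Icc 1 H := mem_Icc.mpr ⟨h1.trans hhk, Nat.le_of_lt_succ hkH⟩
  intro s
  rw [hVstar k hk]
  refine sup'_le _ _ fun a _ => ?_
  rw [hQstar k hk]
  have hbound := bellmanBackup_le_one_add (hr s a) (hP0 s a) (hP1 s a) ih
  push_cast at hbound
  linarith

variable {f b Q : ℕ → S → A → ℝ} {V : ℕ → S → ℝ}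

lemma optimalQ_le_Q_of_optimalValue_le (hr : ∀ s a, r s a ≤ 1)
    (hP0 : ∀ s a s', 0 ≤ P s a s') (hP1 : ∀ s a, ∑ s', P s a s' = 1)
    (hVstarTop : ∀ s, Vstar (H + 1) s = 0)
    (hQstar : ∀ h ∈ Icc 1 H, ∀ s a, Qstar h s a = bellmanBackup r P (Vstar (h + 1)) s a)
    (hVstar : ∀ h ∈ Icc 1 H, ∀ s, Vstar h s = univ.sup' univ_nonempty (fun a => Qstar h s a))
    (hQ : ∀ h ∈ Icc 1 H, ∀ s a, Q h s a = min (f h s a + b h s a) (H : ℝ))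
    (hdom : ∀ h ∈ Icc 1 H, ∀ s a, |bellmanBackup r P (V (h + 1)) s a - f h s a| ≤ b h s a)
    {h : ℕ} (hh : h ∈ Icc 1 H) (hVnext : ∀ s', Vstar (h + 1) s' ≤ V (h + 1) s') (s : S) (a : A) :
    Qstar h s a ≤ Q h s a := by
  have hnext : h + 1 ∈ Icc 1 (H + 1) := by simp only [mem_Icc] at hh ⊢; omega
  have hbound := bellmanBackup_le_one_add (hr s a) (hP0 s a) (hP1 s a)
    (optimalValue_le_horizon hr hP0 hP1 hVstarTop hQstar hVstar (h + 1) hnext)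
  have h1 : (1 : ℝ) ≤ h := by exact_mod_cast (mem_Icc.mp hh).1
  push_cast at hbound
  rw [hQstar h hh, hQ h hh]
  exact le_min_add_of_le_of_abs_sub_le (bellmanBackup_mono (hP0 s a) hVnext)
    (by linarith) (hdom h hh s a)

lemma optimalValue_le_value (hr : ∀ s a, r s a ≤ 1)
    (hP0 : ∀ s a s', 0 ≤ P s a s') (hP1 : ∀ s a, ∑ s', P s a s' = 1)
    (hVstarTop : ∀ s, Vstar (H + 1) s = 0)
    (hQstar : ∀ h ∈ Icc 1 H, ∀ s a, Qstar h s a = bellmanBackup r P (Vstar (h + 1)) s a)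
    (hVstar : ∀ h ∈ Icc 1 H, ∀ s, Vstar h s = univ.sup' univ_nonempty (fun a => Qstar h s a))
    (hQTop : ∀ s a, Q (H + 1) s a = 0)
    (hQ : ∀ h ∈ Icc 1 H, ∀ s a, Q h s a = min (f h s a + b h s a) (H : ℝ))
    (hV : ∀ h ∈ Icc 1 (H + 1), ∀ s, V h s = univ.sup' univ_nonempty (fun a => Q h s a))
    (hdom : ∀ h ∈ Icc 1 H, ∀ s a, |bellmanBackup r P (V (h + 1)) s a - f h s a| ≤ b h s a) :
    ∀ h ∈ Icc 1 (H + 1), ∀ s, Vstar h s ≤ V h s := by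
  have hVTop : ∀ s, V (H + 1) s = 0 := fun s => by simp [hV (H + 1) (by simp), hQTop]
  intro h hh
  obtain ⟨h1, hle⟩ := mem_Icc.mp hh
  refine Nat.decreasingInduction' (P := fun k => ∀ s, Vstar k s ≤ V k s)
    (fun k hkH hhk ih => ?_) hle (by simp [hVstarTop, hVTop])
  have hk : k ∈ Icc 1 H := mem_Icc.mpr ⟨h1.trans hhk, Nat.le_of_lt_succ hkH⟩
  intro s
  rw [hVstar k hk, hV k (Icc_subset_Icc_right H.le_succ hk)]
  exact sup'_mono_fun fun a _ =>
    optimalQ_le_Q_of_optimalValue_le hr hP0 hP1 hVstarTop hQstar hVstar hQ hdom hk ih s a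

end Optimism

theorem optimism_Q_bounds_general {S A : Type*} [Fintype S] [Fintype A] [Nonempty A]
    (H : ℕ)
    (r : S → A → ℝ) (hr : ∀ s a, r s a ∈ Set.Icc (0 : ℝ) 1)
    (P : S → A → S → ℝ) (hP0 : ∀ s a s', 0 ≤ P s a s') (hP1 : ∀ s a, ∑ s', P s a s' = 1)
    (Qstar : ℕ → S → A → ℝ) (Vstar : ℕ → S → ℝ)
    (hVstarTop : ∀ s, Vstar (H + 1) s = 0)
    (hQstar : ∀ h ∈ Finset.Icc 1 H, ∀ s a,
      Qstar h s a = r s a + ∑ s', P s a s' * Vstar (h + 1) s')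
    (hVstar : ∀ h ∈ Finset.Icc 1 H, ∀ s,
      Vstar h s = univ.sup' univ_nonempty (fun a => Qstar h s a))
    (f b : ℕ → S → A → ℝ)
    (Q : ℕ → S → A → ℝ) (V : ℕ → S → ℝ)
    (hQTop : ∀ s a, Q (H + 1) s a = 0)
    (hQ : ∀ h ∈ Finset.Icc 1 H, ∀ s a, Q h s a = min (f h s a + b h s a) (H : ℝ))
    (hV : ∀ h ∈ Finset.Icc 1 (H + 1), ∀ s,
      V h s = univ.sup' univ_nonempty (fun a => Q h s a))
    (hdom : ∀ h ∈ Finset.Icc 1 H, ∀ s a,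
      |r s a + (∑ s', P s a s' * V (h + 1) s') - f h s a| ≤ b h s a) :
    ∀ h ∈ Finset.Icc 1 H, ∀ s a,
      Qstar h s a ≤ Q h s a ∧
      Q h s a ≤ r s a + (∑ s', P s a s' * V (h + 1) s') + 2 * b h s a := by
  have hr1 : ∀ s a, r s a ≤ 1 := fun s a => (hr s a).2
  intro h hh s a
  have hnext : h + 1 ∈ Icc 1 (H + 1) := by simp only [mem_Icc] at hh ⊢; omega
  have hVnext := optimalValue_le_value hr1 hP0 hP1 hVstarTop hQstar hVstar hQTop hQ hV hdom
    (h + 1) hnext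
  refine ⟨optimalQ_le_Q_of_optimalValue_le hr1 hP0 hP1 hVstarTop hQstar hVstar hQ hdom hh
    hVnext s a, ?_⟩
  rw [hQ h hh]
  exact min_add_le_add_two_mul_of_abs_sub_le (hdom h hh s a)

/-- Lemma on optimism, Lemma 8 of the paper: if the bonus dominates the error
of the estimate `f_h` of the one-step backup, then the truncated optimistic `Q`-functions
`Q_h = min{f_h + b_h, H}` satisfy `Q*_h ≤ Q_h ≤ Bellman backup of V_{h+1} + 2 b_h`. -/
theorem optimism_Q_bounds {S A : Type*} [Fintype S] [Fintype A] [Nonempty S] [Nonempty A]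
    (H : ℕ) (hH : 1 ≤ H)
    (r : S → A → ℝ) (hr : ∀ s a, r s a ∈ Set.Icc (0 : ℝ) 1)
    (P : S → A → S → ℝ) (hP0 : ∀ s a s', 0 ≤ P s a s') (hP1 : ∀ s a, ∑ s', P s a s' = 1)
    (Qstar : ℕ → S → A → ℝ) (Vstar : ℕ → S → ℝ)
    (hVstarTop : ∀ s, Vstar (H + 1) s = 0)
    (hQstar : ∀ h ∈ Finset.Icc 1 H, ∀ s a,
      Qstar h s a = r s a + ∑ s', P s a s' * Vstar (h + 1) s')
    (hVstar : ∀ h ∈ Finset.Icc 1 H, ∀ s,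
      Vstar h s = univ.sup' univ_nonempty (fun a => Qstar h s a))
    (f b : ℕ → S → A → ℝ) (hb0 : ∀ h s a, 0 ≤ b h s a)
    (Q : ℕ → S → A → ℝ) (V : ℕ → S → ℝ)
    (hQTop : ∀ s a, Q (H + 1) s a = 0)
    (hQ : ∀ h ∈ Finset.Icc 1 H, ∀ s a, Q h s a = min (f h s a + b h s a) (H : ℝ))
    (hV : ∀ h ∈ Finset.Icc 1 (H + 1), ∀ s,
      V h s = univ.sup' univ_nonempty (fun a => Q h s a))
    (hdom : ∀ h ∈ Finset.Icc 1 H, ∀ s a,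
      |r s a + (∑ s', P s a s' * V (h + 1) s') - f h s a| ≤ b h s a) :
    ∀ h ∈ Finset.Icc 1 H, ∀ s a,
      Qstar h s a ≤ Q h s a ∧
      Q h s a ≤ r s a + (∑ s', P s a s' * V (h + 1) s') + 2 * b h s a :=
  optimism_Q_bounds_general H r hr P hP0 hP1 Qstar Vstar hVstarTop hQstar hVstar f b Q V hQTop hQ hV
    hdom
end

section
/- Let S and A be finite nonempty sets, H ≥ 1 an integer, r : S×A → [0,1], and P(·|s,a) a probability distribution on S for each (s,a). Let b_h : S×A → [0,∞) and Q_h : S×A → ℝ for h ∈ {1,…,H}, define Q_{H+1} ≡ 0 and V_h(s) := max_{a∈A} Q_h(s,a) (so V_{H+1} ≡ 0), and suppose that for all h ∈ {1,…,H} and all (s,a): Q_h(s,a) ≤ r(s,a) + ∑_{s'∈S} P(s'|s,a)·V_{h+1}(s') + 2·b_h(s,a). Let π = (π_h)_{h=1}^H be a policy with π_h(s) ∈ argmax_{a∈A} Q_h(s,a) for every s, and define V^π by V^π_{H+1} ≡ 0 and V^π_h(s) = r(s,π_h(s)) + ∑_{s'∈S} P(s'|s,π_h(s))·V^π_{h+1}(s').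 Then for any sequence of states s_1, …, s_{H+1} ∈ S, with a_h := π_h(s_h), one has V_1(s_1) − V^π_1(s_1) ≤ ∑_{h=1}^{H−1} ξ_h + 2·∑_{h=1}^{H} b_h(s_h, a_h), where ξ_h := ∑_{s'∈S} P(s'|s_h,a_h)·(V_{h+1}(s') − V^π_{h+1}(s')) − (V_{h+1}(s_{h+1}) − V^π_{h+1}(s_{h+1})). -/
/-! Greedy choice and optimism give, at every step, the bound
`V_h(s) − V^π_h(s) ≤ ∑ P(s'|s,π_h s)(V_{h+1} − V^π_{h+1})(s') + 2 b_h(s, π_h s)`.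
At `s = s_h` the expectation is `ξ_h` plus the gap at `s_{h+1}`, so the gaps telescope from
`h = 1` to `H + 1`, where both value functions vanish; for the same reason `ξ_H = 0`. -/

open Finset

theorem le_sum_Ico_add_of_le_add {α : Type*} [AddCommGroup α] [PartialOrder α]
    [IsOrderedAddMonoid α] {d x : ℕ → α} {m n : ℕ} (hmn : m ≤ n)
    (hd : ∀ k ∈ Ico m n, d k ≤ x k + d (k + 1)) :
    d m ≤ ∑ k ∈ Ico m n, x k + d n := by
  have htelescope : ∑ k ∈ Ico m n, (d k - d (k + 1)) = d m - d n := by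
    rw [← neg_sub, ← sum_Ico_sub d hmn, ← sum_neg_distrib]
    simp only [neg_sub]
  calc d m = ∑ k ∈ Ico m n, (d k - d (k + 1)) + d n := by rw [htelescope, sub_add_cancel]
    _ ≤ ∑ k ∈ Ico m n, x k + d n := by
      gcongr with k hk
      exact sub_le_iff_le_add.mpr (hd k hk)

theorem sub_le_sum_mul_sub_add {S : Type*} [Fintype S] {p v w : S → ℝ} {x y q ρ β : ℝ}
    (hxq : x ≤ q) (hq : q ≤ ρ + ∑ s, p s * v s + β) (hy : y = ρ + ∑ s, p s * w s) :
    x - y ≤ ∑ s, p s * (v s - w s) + β := by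
  simp only [mul_sub, sum_sub_distrib]
  linarith

theorem regret_decomposition_general {S A : Type*} [Fintype S] [Fintype A] [Nonempty A]
    (H : ℕ)
    (r : S → A → ℝ)
    (P : S → A → S → ℝ)
    (b : ℕ → S → A → ℝ)
    (Q : ℕ → S → A → ℝ) (hQTop : ∀ s a, Q (H + 1) s a = 0)
    (V : ℕ → S → ℝ)
    (hV : ∀ h ∈ Finset.Icc 1 (H + 1), ∀ s,
      V h s = univ.sup' univ_nonempty (fun a => Q h s a))
    (hub : ∀ h ∈ Finset.Icc 1 H, ∀ s a,
      Q h s a ≤ r s a + (∑ s', P s a s' * V (h + 1) s') + 2 * b h s a)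
    (π : ℕ → S → A)
    (hπ : ∀ h ∈ Finset.Icc 1 H, ∀ s, ∀ a, Q h s a ≤ Q h s (π h s))
    (Vπ : ℕ → S → ℝ) (hVπTop : ∀ s, Vπ (H + 1) s = 0)
    (hVπ : ∀ h ∈ Finset.Icc 1 H, ∀ s,
      Vπ h s = r s (π h s) + ∑ s', P s (π h s) s' * Vπ (h + 1) s')
    (st : ℕ → S) :
    V 1 (st 1) - Vπ 1 (st 1) ≤
      (∑ h ∈ Finset.Icc 1 (H - 1),
        ((∑ s', P (st h) (π h (st h)) s' * (V (h + 1) s' - Vπ (h + 1) s')) -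
          (V (h + 1) (st (h + 1)) - Vπ (h + 1) (st (h + 1))))) +
      2 * ∑ h ∈ Finset.Icc 1 H, b h (st h) (π h (st h)) := by
  set ξ : ℕ → ℝ := fun h =>
    (∑ s', P (st h) (π h (st h)) s' * (V (h + 1) s' - Vπ (h + 1) s')) -
      (V (h + 1) (st (h + 1)) - Vπ (h + 1) (st (h + 1))) with hξ
  have hVTop : ∀ s, V (H + 1) s = 0 := fun s => by
    rw [hV (H + 1) (right_mem_Icc.mpr (by omega)) s]
    simp only [hQTop, sup'_const]
  have hstep : ∀ h ∈ Ico 1 (H + 1), V h (st h) - Vπ h (st h) ≤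
      (ξ h + 2 * b h (st h) (π h (st h))) +
        (V (h + 1) (st (h + 1)) - Vπ (h + 1) (st (h + 1))) := by
    intro h hh
    rw [Ico_add_one_right_eq_Icc] at hh
    have hVh : V h (st h) ≤ Q h (st h) (π h (st h)) := by
      rw [hV h (Icc_subset_Icc_right (by omega) hh)]
      exact sup'_le _ _ fun a _ => hπ h hh (st h) a
    have hbellman := sub_le_sum_mul_sub_add hVh (hub h hh _ _) (hVπ h hh _)
    linarith
  have hξTop : ∑ h ∈ Icc 1 (H - 1), ξ h = ∑ h ∈ Icc 1 H, ξ h := by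
    refine sum_subset (Icc_subset_Icc_right (by omega)) fun h hh hh' => ?_
    obtain rfl : h = H := by simp only [mem_Icc] at hh hh'; omega
    simp [hξ, hVTop, hVπTop]
  have htel := le_sum_Ico_add_of_le_add (d := fun h => V h (st h) - Vπ h (st h)) (by omega) hstep
  rw [Ico_add_one_right_eq_Icc, sum_add_distrib, ← mul_sum, hVTop, hVπTop] at htel
  rw [hξTop]
  linarith

/-- regret decomposition, Lemma 9 of the paper: for the greedy policy `π`
with respect to optimistic `Q`-functions, along any state sequence `s_1, …, s_{H+1}`,
`V_1(s_1) − V^π_1(s_1)` is at most the sum of the martingale terms `ξ_h` plus twice the sum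
of the bonuses along the trajectory. -/
theorem regret_decomposition {S A : Type*} [Fintype S] [Fintype A] [Nonempty S] [Nonempty A]
    (H : ℕ) (hH : 1 ≤ H)
    (r : S → A → ℝ) (hr : ∀ s a, r s a ∈ Set.Icc (0 : ℝ) 1)
    (P : S → A → S → ℝ) (hP0 : ∀ s a s', 0 ≤ P s a s') (hP1 : ∀ s a, ∑ s', P s a s' = 1)
    (b : ℕ → S → A → ℝ) (hb0 : ∀ h s a, 0 ≤ b h s a)
    (Q : ℕ → S → A → ℝ) (hQTop : ∀ s a, Q (H + 1) s a = 0)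
    (V : ℕ → S → ℝ)
    (hV : ∀ h ∈ Finset.Icc 1 (H + 1), ∀ s,
      V h s = univ.sup' univ_nonempty (fun a => Q h s a))
    (hub : ∀ h ∈ Finset.Icc 1 H, ∀ s a,
      Q h s a ≤ r s a + (∑ s', P s a s' * V (h + 1) s') + 2 * b h s a)
    (π : ℕ → S → A)
    (hπ : ∀ h ∈ Finset.Icc 1 H, ∀ s, ∀ a, Q h s a ≤ Q h s (π h s))
    (Vπ : ℕ → S → ℝ) (hVπTop : ∀ s, Vπ (H + 1) s = 0)
    (hVπ : ∀ h ∈ Finset.Icc 1 H, ∀ s,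
      Vπ h s = r s (π h s) + ∑ s', P s (π h s) s' * Vπ (h + 1) s')
    (st : ℕ → S) :
    V 1 (st 1) - Vπ 1 (st 1) ≤
      (∑ h ∈ Finset.Icc 1 (H - 1),
        ((∑ s', P (st h) (π h (st h)) s' * (V (h + 1) s' - Vπ (h + 1) s')) -
          (V (h + 1) (st (h + 1)) - Vπ (h + 1) (st (h + 1))))) +
      2 * ∑ h ∈ Finset.Icc 1 H, b h (st h) (π h (st h)) :=
  regret_decomposition_general H r P b Q hQTop V hV hub π hπ Vπ hVπTop hVπ st
end

section
/- Let X be a set, F a class of real-valued functions on X, ε > 0, and d := dim_E(F, ε) with 1 ≤ d < ∞. Let H ≥ 1 and K ≥ 1 be integers, let z^k_h ∈ X for (k,h) ∈ [K]×[H], and let L ⊆ [K]×[H] be nonempty. Then there exist (k,h) ∈ L, an integer m ≥ |L|/d − H, and pairwise disjoint sub-multisets Z_1, …, Z_m of the multiset {z^τ_{h'} : (τ,h') ∈ L, τ ∈ [k−1]} such that z^k_h is ε-dependent on Z_j with respect to F for every j ∈ {1,…,m}. -/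
/-! Sort the indices in `L` by episode and distribute the points greedily into
`N = ⌊(|L| - 1) / d⌋` buckets, appending each point to some bucket of which it is
`ε`-independent. Every bucket stays an `ε`-independent sequence, so holds at most `d` points;
as `N d < |L|`, some point `z^k_h` must arrive that is `ε`-dependent on every bucket. All
buckets then consist of earlier points, of episode `≤ k`. Being disjoint and not containing
`(k, h)`, fewer than `H` of them meet episode `k`, and the remaining `N + 1 - H ≥ |L|/d - H`
buckets are the required multisets. -/

open Finset

section Eluder

variable {X : Type*} {F : Set (X → ℝ)} {ε : ℝ}

lemma List.map_get_univ_filter_lt (l : List X) (i : Fin l.length) :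
    ((univ.filter (· < i)).val.map l.get : Multiset X) = ↑(l.take i) := by
  have hprefix : univ.filter (· < i) = univ.map (Fin.castLEEmb i.isLt.le) := by
    ext j
    simp only [Finset.mem_filter, Finset.mem_univ, true_and, Finset.mem_map, Fin.castLEEmb_apply]
    exact ⟨fun hj => ⟨⟨j, hj⟩, rfl⟩, by rintro ⟨a, rfl⟩; exact a.isLt⟩
  rw [hprefix, map_val, Multiset.map_map, Fin.univ_val_map]
  congr 1
  exact (List.ofFn_get l ▸ Fin.ofFn_take_eq_take_ofFn i.isLt.le l.get :)

def EluderIndep (F : Set (X → ℝ)) (ε : ℝ) (l : List X) : Prop :=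
  ∀ i (hi : i < l.length), ¬ EpsDep F ε ↑(l.take i) l[i]

namespace EluderIndep

lemma nil : EluderIndep F ε [] := fun _ hi => absurd hi (Nat.not_lt_zero _)

lemma append_singleton {l : List X} {x : X} (hl : EluderIndep F ε l)
    (hx : ¬ EpsDep F ε ↑l x) : EluderIndep F ε (l ++ [x]) := by
  intro i hi
  rcases Nat.lt_or_ge i l.length with hil | hil
  · rw [List.take_append_of_le_length hil.le, List.getElem_append_left hil]
    exact hl i hil
  · obtain rfl : i = l.length := by
      simp only [List.length_append, List.length_singleton] at hi
      omega
    simpa using hx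

lemma eluderLen {l : List X} (hl : EluderIndep F ε l) : EluderLen F ε l.length :=
  ⟨ε, le_rfl, l.get, fun i => by
    rw [List.map_get_univ_filter_lt]
    exact hl i i.isLt⟩

lemma length_le {l : List X} {d : ℕ} (hd : d ∈ upperBounds {n | EluderLen F ε n})
    (hl : EluderIndep F ε l) : l.length ≤ d :=
  hd hl.eluderLen

end EluderIndep

section Greedy

variable {α ι : Type*} [Fintype ι]

lemma exists_eluderIndep_partition_or_epsDep (g : α → X) (P : List α) :
    (∃ B : ι → List α, (∀ i, EluderIndep F ε ((B i).map g)) ∧ ∑ i, (B i : Multiset α) = P) ∨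
    ∃ (P₁ : List α) (q : α) (P₂ : List α), P = P₁ ++ q :: P₂ ∧
      ∃ B : ι → Multiset α, ∑ i, B i ≤ P₁ ∧
      ∀ i, EpsDep F ε ((B i).map g) (g q) := by
  classical
  induction P using List.reverseRecOn with
  | nil => exact Or.inl ⟨fun _ => [], fun _ => by simpa using EluderIndep.nil, by simp⟩
  | append_singleton P x ih =>
    rcases ih with ⟨B, hB, hsum⟩ | ⟨P₁, q, P₂, rfl, B, hle, hdep⟩
    · by_cases hx : ∃ i, ¬ EpsDep F ε ((B i : Multiset α).map g) (g x)
      · obtain ⟨i, hi⟩ := hx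
        refine Or.inl ⟨Function.update B i (B i ++ [x]), fun j => ?_, ?_⟩
        · rcases eq_or_ne j i with rfl | hj
          · simpa using (hB j).append_singleton (by simpa using hi)
          · simpa [hj] using hB j
        · have hupdate : ∀ j, (↑(Function.update B i (B i ++ [x]) j) : Multiset α) =
              ↑(B j) + if j = i then {x} else 0 := by
            intro j
            rcases eq_or_ne j i with rfl | hj
            · simp only [Function.update_self, if_pos]; rfl
            · simp [hj]
          simp only [hupdate, sum_add_distrib, hsum, sum_ite_eq', mem_univ, if_true]
          rfl
      · simp only [not_exists, not_not] at hx
        exact Or.inr ⟨P, x, [], by simp, fun i => B i, hsum.le, hx⟩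
    · exact Or.inr ⟨P₁, q, P₂ ++ [x], by simp, B, hle, hdep⟩

lemma exists_epsDep_of_card_mul_lt {d : ℕ} (hd : d ∈ upperBounds {n | EluderLen F ε n})
    (g : α → X) {P : List α} (hP : Fintype.card ι * d < P.length) :
    ∃ (P₁ : List α) (q : α) (P₂ : List α), P = P₁ ++ q :: P₂ ∧
      ∃ B : ι → Multiset α, ∑ i, B i ≤ P₁ ∧
      ∀ i, EpsDep F ε ((B i).map g) (g q) := by
  refine (exists_eluderIndep_partition_or_epsDep g P).resolve_left ?_
  rintro ⟨B, hB, hsum⟩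
  have : P.length ≤ Fintype.card ι * d := calc
    P.length = ∑ i, (B i).length := by
      rw [← Multiset.coe_card, ← hsum, Multiset.card_sum]; rfl
    _ ≤ ∑ _i : ι, d := sum_le_sum fun i _ => by simpa using (hB i).length_le hd
    _ = Fintype.card ι * d := by simp
  omega

end Greedy

end Eluder

lemma Multiset.exists_coe_eq_pairwise_le_comp {α β : Type*} [LinearOrder β] (f : α → β)
    (s : Multiset α) : ∃ P : List α, (P : Multiset α) = s ∧ P.Pairwise (fun a b => f a ≤ f b) := by
  induction s using Quotient.inductionOn with | h l => ?_
  refine ⟨l.mergeSort (fun a b => f a ≤ f b), Multiset.coe_eq_coe.2 (List.mergeSort_perm _ _), ?_⟩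
  simpa using List.pairwise_mergeSort (le := fun a b => f a ≤ f b)
    (fun a b c hab hbc => by simpa using (of_decide_eq_true hab).trans (of_decide_eq_true hbc))
    (fun a b => by simpa using le_total (f a) (f b)) l

open scoped Classical in
lemma Multiset.card_filter_exists_mem_le_countP_sum {α ι : Type*} [Fintype ι]
    (B : ι → Multiset α) (p : α → Prop) [DecidablePred p] :
    #{i | ∃ a ∈ B i, p a} ≤ (∑ i, B i).countP p := by
  rw [card_filter, ← Multiset.coe_countPAddMonoidHom, map_sum]
  exact sum_le_sum fun i _ => by
    split_ifs with h
    exacts [Multiset.countP_pos.2 h, Nat.zero_le _]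

lemma Finset.card_filter_fst_eq_le {α β : Type*} [DecidableEq α] {L : Finset (α × β)}
    {s : Finset α} {t : Finset β} (hL : L ⊆ s ×ˢ t) (a : α) : #{p ∈ L | p.1 = a} ≤ #t :=
  calc #{p ∈ L | p.1 = a} ≤ #({a} ×ˢ t) := card_le_card fun p hp => by
        obtain ⟨hpL, rfl⟩ := mem_filter.1 hp
        exact mem_product.2 ⟨mem_singleton_self _, (mem_product.1 (hL hpL)).2⟩
    _ = #t := by simp

open scoped Classical in
lemma card_filter_exists_mem_ge_lt_countP {α β ι : Type*} [LinearOrder β] [Fintype ι]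
    {f : α → β} {P₁ P₂ : List α} {q : α} (hsorted : (P₁ ++ q :: P₂).Pairwise (f · ≤ f ·))
    {B : ι → Multiset α} (hB : ∑ i, B i ≤ P₁) :
    #{i | ∃ a ∈ B i, f q ≤ f a} < (↑(P₁ ++ q :: P₂) : Multiset α).countP (f · = f q) := by
  have hle : ∀ a ∈ P₁, f a ≤ f q := fun a ha =>
    (List.pairwise_append.1 hsorted).2.2 a ha q List.mem_cons_self
  calc #{i | ∃ a ∈ B i, f q ≤ f a}
      ≤ (∑ i, B i).countP (f q ≤ f ·) := Multiset.card_filter_exists_mem_le_countP_sum B _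
    _ ≤ (P₁ : Multiset α).countP (f q ≤ f ·) := Multiset.countP_le_of_le _ hB
    _ = P₁.countP (f · = f q) := by
      rw [Multiset.coe_countP]
      exact List.countP_congr fun a ha => by simp [le_antisymm_iff, hle a ha]
    _ < (↑(P₁ ++ q :: P₂) : Multiset α).countP (f · = f q) := by
      simp [List.countP_append]

lemma exists_subfamily_lt_of_pairwise {α β ι : Type*} [LinearOrder β] [Fintype ι]
    {f : α → β} {P₁ P₂ : List α} {q : α} (hsorted : (P₁ ++ q :: P₂).Pairwise (f · ≤ f ·))
    {B : ι → Multiset α} (hB : ∑ i, B i ≤ P₁) :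
    ∃ s : Finset ι, Fintype.card ι < #s + (↑(P₁ ++ q :: P₂) : Multiset α).countP (f · = f q) ∧
      ∑ i ∈ s, B i ≤ (↑(P₁ ++ q :: P₂) : Multiset α).filter (f · < f q) := by
  classical
  refine ⟨univ.filter fun i => ∀ a ∈ B i, f a < f q, ?_, ?_⟩
  · have hsplit := card_filter_add_card_filter_not (s := univ) (∀ a ∈ B ·, f a < f q)
    have hlost := card_filter_exists_mem_ge_lt_countP hsorted hB
    simp only [not_forall, not_lt, exists_prop, card_univ] at hsplit
    omega
  · rw [Multiset.le_filter]
    refine ⟨(sum_le_sum_of_subset (subset_univ _)).trans (hB.trans ?_), fun a ha => ?_⟩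
    · exact Multiset.coe_le.2 (List.prefix_append _ _).sublist.subperm
    · obtain ⟨i, hi, haB⟩ := Multiset.mem_sum.1 ha
      exact (Finset.mem_filter.1 hi).2 a haB

lemma Nat.cast_div_sub_le_of_pred_div_lt {n d m H : ℕ} (hd : 1 ≤ d) (h : (n - 1) / d < m + H) :
    (n : ℝ) / d - H ≤ m := by
  have hn : n ≤ (m + H) * d := calc
    n ≤ ((n - 1) / d + 1) * d := by
      have := Nat.lt_div_mul_add (a := n - 1) hd
      rw [add_mul]
      omega
    _ ≤ (m + H) * d := Nat.mul_le_mul_right d h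
  rw [sub_le_iff_le_add, div_le_iff₀ (by exact_mod_cast hd)]
  exact_mod_cast hn

theorem exists_dependent_point_general {X : Type*} (F : Set (X → ℝ))
    (ε : ℝ)
    (d : ℕ) (hd1 : 1 ≤ d) (hd : IsGreatest {n : ℕ | EluderLen F ε n} d)
    (H K : ℕ)
    (z : ℕ → ℕ → X)
    (L : Finset (ℕ × ℕ)) (hL : L ⊆ Finset.Icc 1 K ×ˢ Finset.Icc 1 H) (hLne : L.Nonempty) :
    ∃ k h : ℕ, (k, h) ∈ L ∧ ∃ m : ℕ, (L.card : ℝ) / d - H ≤ m ∧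
      ∃ Zs : Fin m → Multiset X,
        (∑ j : Fin m, Zs j) ≤
          ((L.filter (fun q : ℕ × ℕ => q.1 < k)).val.map (fun q : ℕ × ℕ => z q.1 q.2)) ∧
        ∀ j : Fin m, EpsDep F ε (Zs j) (z k h) := by
  set N := (#L - 1) / d
  obtain ⟨P, hPL, hsorted⟩ := Multiset.exists_coe_eq_pairwise_le_comp Prod.fst L.val
  have hN : Fintype.card (Fin N) * d < P.length := by
    rw [Fintype.card_fin, ← Multiset.coe_card, hPL, card_val]
    exact (Nat.div_mul_le_self _ _).trans_lt (Nat.sub_lt hLne.card_pos one_pos)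
  obtain ⟨P₁, ⟨k, h⟩, P₂, rfl, B, hBP₁, hdep⟩ :=
    exists_epsDep_of_card_mul_lt hd.2 (fun q : ℕ × ℕ => z q.1 q.2) hN
  obtain ⟨keep, hcard, hkeep⟩ := exists_subfamily_lt_of_pairwise hsorted hBP₁
  rw [hPL, Fintype.card_fin] at hcard
  rw [hPL] at hkeep
  dsimp only at hcard hkeep
  have hfiber : L.val.countP (·.1 = k) ≤ H := by
    rw [Multiset.countP_eq_card_filter, ← filter_val, card_val]
    simpa using card_filter_fst_eq_le hL k
  refine ⟨k, h, by simp [← mem_val, ← hPL], #keep,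
    Nat.cast_div_sub_le_of_pred_div_lt hd1 (by omega),
    fun j => (B (keep.equivFin.symm j)).map fun q => z q.1 q.2, ?_, fun j => hdep _⟩
  calc ∑ j, (B (keep.equivFin.symm j)).map (fun q => z q.1 q.2)
      = (∑ i ∈ keep, B i).map (fun q => z q.1 q.2) := by
        rw [← Multiset.coe_mapAddMonoidHom, map_sum, ← keep.sum_coe_sort]
        exact keep.equivFin.symm.sum_comp fun i => Multiset.mapAddMonoidHom _ (B i)
    _ ≤ _ := by
      rw [filter_val]
      exact Multiset.map_le_map hkeep

/-- pigeonhole step in Lemma 10 of the paper: for any nonempty set `L` of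
indices there is some `(k,h) ∈ L` and at least `|L|/d − H` pairwise disjoint sub-multisets of
the data indexed by `L` with episode index `< k`, on each of which `z^k_h` is `ε`-dependent. -/
theorem exists_dependent_point {X : Type*} (F : Set (X → ℝ))
    (ε : ℝ) (hε : 0 < ε)
    (d : ℕ) (hd1 : 1 ≤ d) (hd : IsGreatest {n : ℕ | EluderLen F ε n} d)
    (H K : ℕ) (hH : 1 ≤ H) (hK : 1 ≤ K)
    (z : ℕ → ℕ → X)
    (L : Finset (ℕ × ℕ)) (hL : L ⊆ Finset.Icc 1 K ×ˢ Finset.Icc 1 H) (hLne : L.Nonempty) :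
    ∃ k h : ℕ, (k, h) ∈ L ∧ ∃ m : ℕ, (L.card : ℝ) / d - H ≤ m ∧
      ∃ Zs : Fin m → Multiset X,
        (∑ j : Fin m, Zs j) ≤
          ((L.filter (fun q : ℕ × ℕ => q.1 < k)).val.map (fun q : ℕ × ℕ => z q.1 q.2)) ∧
        ∀ j : Fin m, EpsDep F ε (Zs j) (z k h) :=
  exists_dependent_point_general F ε d hd1 hd H K z L hL hLne
end

section
/- Let T ≥ 1 be an integer and let H ≥ 1, d ≥ 1, c > 0, β ≥ 0 be reals. Let w_1 ≥ w_2 ≥ ⋯ ≥ w_T be real numbers with 0 ≤ w_t ≤ 4H for every t ∈ [T], and suppose that every t ∈ [T] with w_t ≥ 1/T satisfies t ≤ (c·β/w_t² + H)·d. Then ∑_{t=1}^{T} w_t ≤ 1 + 4H²·d + 2·√(c·d·T·β). -/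
/-!
Put `x = H d` and `a = √(c β d)`. The terms with `w_t < 1/T` contribute at most `1` in total;
every other term satisfies `(t - x) w_t² ≤ a²` and is bounded by the increment over `[t - 1, t]`
of the potential `Φ(s) = 4H · min(s, x) + 2a · √((s - x)₊)`: below `x` this is the trivial bound
`4H`, above `x + 1` it is `w_t ≤ a / √(t - x) ≤ 2a (√(t - x) - √(t - 1 - x))`, and on the one
interval straddling `x` the two bounds interpolate. The increments telescope to
`Φ(T) - Φ(0) ≤ 4H x + 2a √T`.
-/

open Finset Real

theorem sum_Icc_one_telescope (g : ℝ → ℝ) (T : ℕ) :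
    ∑ t ∈ Icc 1 T, (g t - g (t - 1)) = g T - g 0 := by
  induction T with
  | zero => simp
  | succ n ih =>
    rw [sum_Icc_succ_top (by omega), ih]
    push_cast
    rw [add_sub_cancel_right]
    ring

theorem one_le_two_mul_sqrt_mul_sub_sqrt_sub_one {y : ℝ} (hy : 1 ≤ y) :
    1 ≤ 2 * √y * (√y - √(y - 1)) := by
  have hu := sq_sqrt (show 0 ≤ y by linarith)
  have hv := sq_sqrt (show 0 ≤ y - 1 by linarith)
  nlinarith [sq_nonneg (√y - √(y - 1))]

theorem mul_sqrt_le_sqrt_of_mul_sq_le {w y A : ℝ} (hw : 0 ≤ w) (h : y * w ^ 2 ≤ A) :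
    w * √y ≤ √A := by
  rw [← sqrt_sq hw, ← sqrt_mul (sq_nonneg w)]
  exact sqrt_le_sqrt (by linarith)

/-- `√` vanishes on negative reals, so the last factor is `√((s - x)₊)`. -/
noncomputable def bonusPotential (K A x s : ℝ) : ℝ := K * min s x + 2 * √A * √(s - x)

theorem bonusPotential_mono {K A x : ℝ} (hK : 0 ≤ K) : Monotone (bonusPotential K A x) := by
  intro s s' h
  unfold bonusPotential
  gcongr

theorem le_bonusPotential_sub {w K A x s : ℝ} (hw : 0 ≤ w) (hwK : w ≤ K)
    (hA : (s - x) * w ^ 2 ≤ A) :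
    w ≤ bonusPotential K A x s - bonusPotential K A x (s - 1) := by
  have hwA := mul_sqrt_le_sqrt_of_mul_sq_le hw hA
  unfold bonusPotential
  rcases le_or_gt s x with hsx | hsx
  · rw [min_eq_left hsx, min_eq_left (by linarith),
      sqrt_eq_zero_of_nonpos (by linarith : s - x ≤ 0),
      sqrt_eq_zero_of_nonpos (by linarith : s - 1 - x ≤ 0)]
    linarith
  rcases le_or_gt s (x + 1) with hsx1 | hsx1
  · rw [min_eq_right hsx.le, min_eq_left (by linarith),
      sqrt_eq_zero_of_nonpos (by linarith : s - 1 - x ≤ 0)]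
    have hy := sq_sqrt (show 0 ≤ s - x by linarith)
    nlinarith [sqrt_nonneg (s - x)]
  · rw [min_eq_right hsx.le, min_eq_right (by linarith), show s - 1 - x = s - x - 1 by ring]
    have key := one_le_two_mul_sqrt_mul_sub_sqrt_sub_one (show 1 ≤ s - x by linarith)
    have hsqrt : √(s - x - 1) ≤ √(s - x) := sqrt_le_sqrt (by linarith)
    nlinarith

theorem bonusPotential_sub_bonusPotential_zero_le {K A x : ℝ} (hK : 0 ≤ K) (hx : 0 ≤ x)
    (s : ℝ) : bonusPotential K A x s - bonusPotential K A x 0 ≤ K * x + 2 * √A * √s := by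
  have hzero : bonusPotential K A x 0 = 0 := by
    simp [bonusPotential, hx, sqrt_eq_zero_of_nonpos]
  rw [hzero, sub_zero, bonusPotential]
  gcongr
  · exact min_le_right _ _
  · linarith

theorem bonus_sum_bound_general (T : ℕ)
    (H d c β : ℝ) (hH : 1 ≤ H) (hd : 1 ≤ d)
    (w : ℕ → ℝ)
    (hw4H : ∀ t ∈ Finset.Icc 1 T, w t ≤ 4 * H)
    (hkey : ∀ t ∈ Finset.Icc 1 T, 1 / (T : ℝ) ≤ w t → (t : ℝ) ≤ (c * β / (w t) ^ 2 + H) * d) :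
    ∑ t ∈ Finset.Icc 1 T, w t ≤ 1 + 4 * H ^ 2 * d + 2 * Real.sqrt (c * d * T * β) := by
  set Φ := bonusPotential (4 * H) (c * β * d) (H * d)
  have hterm : ∀ t ∈ Icc 1 T, w t ≤ 1 / T + (Φ t - Φ (t - 1)) := by
    intro t ht
    rcases le_or_gt (1 / (T : ℝ)) (w t) with hbig | hsmall
    · have hT : (0 : ℝ) < T := by
        obtain ⟨h1, h2⟩ := mem_Icc.mp ht
        exact_mod_cast (by omega : 0 < T)
      have hw : 0 < w t := lt_of_lt_of_le (by positivity) hbig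
      have hA : ((t : ℝ) - H * d) * w t ^ 2 ≤ c * β * d := by
        have hk := hkey t ht hbig
        rw [← le_div_iff₀ (by positivity)]
        rw [add_mul, div_mul_eq_mul_div] at hk
        linarith
      linarith [le_bonusPotential_sub hw.le (hw4H t ht) hA, one_div_pos.mpr hT]
    · have hΦ := bonusPotential_mono (A := c * β * d) (x := H * d) (by positivity : 0 ≤ 4 * H)
        (show (t : ℝ) - 1 ≤ t by linarith)
      linarith
  calc ∑ t ∈ Icc 1 T, w t ≤ ∑ t ∈ Icc 1 T, (1 / T + (Φ t - Φ (t - 1))) := sum_le_sum hterm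
    _ = T / T + (Φ T - Φ 0) := by
      rw [sum_add_distrib, sum_Icc_one_telescope, sum_const, Nat.card_Icc]
      simp [div_eq_mul_inv]
    _ ≤ 1 + 4 * (H * (H * d)) + 2 * √(c * β * d) * √T := by
      linarith [div_self_le_one (T : ℝ),
        bonusPotential_sub_bonusPotential_zero_le (A := c * β * d) (by positivity : 0 ≤ 4 * H)
          (by positivity : 0 ≤ H * d) T]
    _ = 1 + 4 * H ^ 2 * d + 2 * Real.sqrt (c * d * T * β) := by
      rw [show c * d * T * β = c * β * d * T by ring, sqrt_mul' _ (Nat.cast_nonneg T)]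
      ring

/-- the deterministic summation bound in Lemma 11 of the paper: if
`w_1 ≥ ⋯ ≥ w_T` are reals in `[0, 4H]` and every `t` with `w_t ≥ 1/T` satisfies
`t ≤ (cβ/w_t² + H)·d`, then `∑_{t=1}^T w_t ≤ 1 + 4H²d + 2√(c·d·T·β)`. -/
theorem bonus_sum_bound (T : ℕ) (hT : 1 ≤ T)
    (H d c β : ℝ) (hH : 1 ≤ H) (hd : 1 ≤ d) (hc : 0 < c) (hβ : 0 ≤ β)
    (w : ℕ → ℝ)
    (hmono : ∀ t t' : ℕ, 1 ≤ t → t ≤ t' → t' ≤ T → w t' ≤ w t)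
    (hw0 : ∀ t ∈ Finset.Icc 1 T, 0 ≤ w t)
    (hw4H : ∀ t ∈ Finset.Icc 1 T, w t ≤ 4 * H)
    (hkey : ∀ t ∈ Finset.Icc 1 T, 1 / (T : ℝ) ≤ w t → (t : ℝ) ≤ (c * β / (w t) ^ 2 + H) * d) :
    ∑ t ∈ Finset.Icc 1 T, w t ≤ 1 + 4 * H ^ 2 * d + 2 * Real.sqrt (c * d * T * β) :=
  bonus_sum_bound_general T H d c β hH hd w hw4H hkey
end

section
/- Let X be a set, F a nonempty class of real-valued functions on X, z_1, …, z_n ∈ X with Z the corresponding multiset, q_1, …, q_n ∈ ℝ, and f* : X → ℝ (not necessarily in F). For g : X → ℝ write ‖g‖_D := (∑_{t=1}^n (g(z_t) − q_t)²)^{1/2}. Let B, C, M, ζ ≥ 0 and suppose: (i) for every f ∈ F, ∑_{t=1}^{n} (f(z_t) − f*(z_t))·(f*(z_t) − q_t) ≥ −B·(‖f − f*‖_Z + 2) − C; (ii) there exists f̃ ∈ F with ‖f̃ − f*‖_Z ≤ √n·ζ; and (iii) f̂ ∈ F is a least-squares minimizer (‖f̂‖_D ≤ ‖f‖_D for all f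 ∈ F) with ‖f̂‖_D + ‖f*‖_D ≤ M. Then ‖f̂ − f*‖²_Z ≤ 2B·‖f̂ − f*‖_Z + 4B + 2C + M·√n·ζ, and consequently ‖f̂ − f*‖_Z ≤ 2B + √(4B + 2C + M·√n·ζ). -/
theorem msNormSq_map_val {ι X : Type*} (s : Finset ι) (z : ι → X) (g : X → ℝ) :
    msNormSq (s.val.map z) g = ∑ t ∈ s, g (z t) ^ 2 := by
  rw [msNormSq, Multiset.map_map]
  exact Finset.sum_map_val s _

theorem msNorm_map_val {ι X : Type*} (s : Finset ι) (z : ι → X) (g : X → ℝ) :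
    msNorm (s.val.map z) g = √(∑ t ∈ s, g (z t) ^ 2) := by
  rw [msNorm, msNormSq_map_val]

namespace Finset

variable {ι : Type*} (s : Finset ι) (a b c : ι → ℝ)

theorem sqrt_sum_sq_sub_eq_dist :
    √(∑ t ∈ s, (a t - b t) ^ 2) =
      dist (WithLp.toLp 2 fun t : s => a t) (WithLp.toLp 2 fun t : s => b t) := by
  simp [EuclideanSpace.dist_eq, Real.dist_eq, sq_abs, sum_attach s fun t => (a t - b t) ^ 2]

theorem sqrt_sum_sq_sub_le_add :
    √(∑ t ∈ s, (a t - c t) ^ 2) ≤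
      √(∑ t ∈ s, (a t - b t) ^ 2) + √(∑ t ∈ s, (b t - c t) ^ 2) := by
  simp only [sqrt_sum_sq_sub_eq_dist]
  exact dist_triangle _ _ _

theorem sum_sq_sub_eq_sub_sub :
    ∑ t ∈ s, (a t - b t) ^ 2 = ∑ t ∈ s, (a t - c t) ^ 2 - ∑ t ∈ s, (b t - c t) ^ 2
      - 2 * ∑ t ∈ s, (a t - b t) * (b t - c t) := by
  rw [mul_sum, ← sum_sub_distrib, ← sum_sub_distrib]
  exact sum_congr rfl fun t _ => by ring

end Finset

theorem sq_sub_sq_le_mul_of_le_add {u v e M : ℝ} (hu : 0 ≤ u) (hv : 0 ≤ v) (he : 0 ≤ e)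
    (hle : u ≤ v + e) (hsum : u + v ≤ M) : u ^ 2 - v ^ 2 ≤ M * e := by
  nlinarith

theorem le_two_mul_add_sqrt_of_sq_le {x b d : ℝ} (hb : 0 ≤ b) (h : x ^ 2 ≤ 2 * b * x + d) :
    x ≤ 2 * b + √d := by
  rcases lt_or_ge d 0 with hd | hd
  · nlinarith [Real.sqrt_nonneg d]
  · nlinarith [Real.sq_sqrt hd, Real.sqrt_nonneg d, sq_nonneg (x - b - √d)]

theorem misspecified_least_squares_inequality_general {X : Type*}
    (F : Set (X → ℝ))
    (n : ℕ) (z : ℕ → X) (q : ℕ → ℝ)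
    (fstar : X → ℝ)
    (B C M ζ : ℝ) (hB : 0 ≤ B)
    (hcross : ∀ f ∈ F,
      -B * (msNorm ((Finset.Icc 1 n).val.map z) (fun x => f x - fstar x) + 2) - C ≤
        ∑ t ∈ Finset.Icc 1 n, (f (z t) - fstar (z t)) * (fstar (z t) - q t))
    (hmis : ∃ ftilde ∈ F,
      msNorm ((Finset.Icc 1 n).val.map z) (fun x => ftilde x - fstar x) ≤
        Real.sqrt (n : ℝ) * ζ)
    (fhat : X → ℝ) (hfhat : fhat ∈ F)
    (hmin : ∀ f ∈ F,
      Real.sqrt (∑ t ∈ Finset.Icc 1 n, (fhat (z t) - q t) ^ 2) ≤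
        Real.sqrt (∑ t ∈ Finset.Icc 1 n, (f (z t) - q t) ^ 2))
    (hM2 : Real.sqrt (∑ t ∈ Finset.Icc 1 n, (fhat (z t) - q t) ^ 2) +
        Real.sqrt (∑ t ∈ Finset.Icc 1 n, (fstar (z t) - q t) ^ 2) ≤ M) :
    msNormSq ((Finset.Icc 1 n).val.map z) (fun x => fhat x - fstar x) ≤
        2 * B * msNorm ((Finset.Icc 1 n).val.map z) (fun x => fhat x - fstar x) +
          4 * B + 2 * C + M * Real.sqrt (n : ℝ) * ζ ∧
      msNorm ((Finset.Icc 1 n).val.map z) (fun x => fhat x - fstar x) ≤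
        2 * B + Real.sqrt (4 * B + 2 * C + M * Real.sqrt (n : ℝ) * ζ) := by
  obtain ⟨ftilde, hftilde, hclose⟩ := hmis
  simp only [msNormSq_map_val, msNorm_map_val] at hcross hclose ⊢
  have hgap : (√(∑ t ∈ Finset.Icc 1 n, (fhat (z t) - q t) ^ 2)) ^ 2 -
      (√(∑ t ∈ Finset.Icc 1 n, (fstar (z t) - q t) ^ 2)) ^ 2 ≤ M * (√n * ζ) := by
    refine sq_sub_sq_le_mul_of_le_add (by positivity) (by positivity)
      ((Real.sqrt_nonneg _).trans hclose) ?_ hM2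
    linarith [hmin ftilde hftilde, Finset.sqrt_sum_sq_sub_le_add (Finset.Icc 1 n)
      (fun t => ftilde (z t)) (fun t => fstar (z t)) q]
  rw [Real.sq_sqrt (by positivity), Real.sq_sqrt (by positivity)] at hgap
  have hsq : ∑ t ∈ Finset.Icc 1 n, (fhat (z t) - fstar (z t)) ^ 2 ≤
      2 * B * √(∑ t ∈ Finset.Icc 1 n, (fhat (z t) - fstar (z t)) ^ 2) +
        4 * B + 2 * C + M * √n * ζ := by
    linarith [hcross fhat hfhat, Finset.sum_sq_sub_eq_sub_sub (Finset.Icc 1 n)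
      (fun t => fhat (z t)) (fun t => fstar (z t)) q]
  refine ⟨hsq, le_two_mul_add_sqrt_of_sq_le hB ?_⟩
  rwa [Real.sq_sqrt (by positivity), ← add_assoc, ← add_assoc]

/-- the deterministic core of the misspecified single-step optimization
error bound, Lemma 12 of the paper: with a misspecification error `ζ` (some `f̃ ∈ F` is
`√n·ζ`-close to `f*` on the data), a least-squares minimizer `f̂` satisfies
`‖f̂ − f*‖²_Z ≤ 2B‖f̂ − f*‖_Z + 4B + 2C + M√n·ζ`, and consequently
`‖f̂ − f*‖_Z ≤ 2B + √(4B + 2C + M√n·ζ)`. -/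
theorem misspecified_least_squares_inequality {X : Type*}
    (F : Set (X → ℝ)) (hFne : F.Nonempty)
    (n : ℕ) (z : ℕ → X) (q : ℕ → ℝ)
    (fstar : X → ℝ)
    (B C M ζ : ℝ) (hB : 0 ≤ B) (hC : 0 ≤ C) (hM : 0 ≤ M) (hζ : 0 ≤ ζ)
    (hcross : ∀ f ∈ F,
      -B * (msNorm ((Finset.Icc 1 n).val.map z) (fun x => f x - fstar x) + 2) - C ≤
        ∑ t ∈ Finset.Icc 1 n, (f (z t) - fstar (z t)) * (fstar (z t) - q t))
    (hmis : ∃ ftilde ∈ F,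
      msNorm ((Finset.Icc 1 n).val.map z) (fun x => ftilde x - fstar x) ≤
        Real.sqrt (n : ℝ) * ζ)
    (fhat : X → ℝ) (hfhat : fhat ∈ F)
    (hmin : ∀ f ∈ F,
      Real.sqrt (∑ t ∈ Finset.Icc 1 n, (fhat (z t) - q t) ^ 2) ≤
        Real.sqrt (∑ t ∈ Finset.Icc 1 n, (f (z t) - q t) ^ 2))
    (hM2 : Real.sqrt (∑ t ∈ Finset.Icc 1 n, (fhat (z t) - q t) ^ 2) +
        Real.sqrt (∑ t ∈ Finset.Icc 1 n, (fstar (z t) - q t) ^ 2) ≤ M) :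
    msNormSq ((Finset.Icc 1 n).val.map z) (fun x => fhat x - fstar x) ≤
        2 * B * msNorm ((Finset.Icc 1 n).val.map z) (fun x => fhat x - fstar x) +
          4 * B + 2 * C + M * Real.sqrt (n : ℝ) * ζ ∧
      msNorm ((Finset.Icc 1 n).val.map z) (fun x => fhat x - fstar x) ≤
        2 * B + Real.sqrt (4 * B + 2 * C + M * Real.sqrt (n : ℝ) * ζ) :=
  misspecified_least_squares_inequality_general F n z q fstar B C M ζ hB hcross hmis fhat hfhat hmin
    hM2
end
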